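/- arXiv:2411.03813 — 6 statements merged into one kernel-verified Lean document; each statement's English description precedes it below -/
import Mathlib

section
/- For all integers n ≥ 3 and m ≥ 56·binom(n,3), every probability distribution D in D_2(n,m) satisfies Pr_{C∼D}[SAT(C)] ≤ 56·binom(n,3)/m. -/
open scoped Classical

/-- A literal over `n` Boolean variables: a (variable, sign) pair. -/
abbrev Lit (n : ℕ) := Fin n × Bool

/-- A clause: a set of three literals whose three variables are pairwise distinct. -/
abbrev Clause (n : ℕ) :=
  {s : Finset (Lit n) // s.card = 3 ∧ (s.image Prod.fst).card = 3}

/-- A 3-SAT instance: a sequence of `m` clauses over `n` variables. -/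
abbrev SatInstance (n m : ℕ) := Fin m → Clause n

/-- The assignment `σ` makes at least one literal of clause `c` true. -/
def Satisfies {n : ℕ} (σ : Fin n → Bool) (c : Clause n) : Prop :=
  ∃ ℓ ∈ c.1, σ ℓ.1 = ℓ.2

/-- The instance `C` is satisfiable. -/
def SAT {n m : ℕ} (C : SatInstance n m) : Prop :=
  ∃ σ : Fin n → Bool, ∀ i, Satisfies σ (C i)

/-- Probability of the event `P` under the distribution (weight function) `D`. -/
noncomputable def pr {α : Type*} [Fintype α] (D : α → ℝ) (P : α → Prop) : ℝ :=
  ∑ a ∈ Finset.univ.filter P, D a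

/-- `D` is a probability distribution on the finite type `α`. -/
def IsDistribution {α : Type*} [Fintype α] (D : α → ℝ) : Prop :=
  (∀ a, 0 ≤ D a) ∧ ∑ a, D a = 1

/-- The clauses of a random instance drawn from `D` are `k`-wise independent with
uniform marginals: any `k` clauses at distinct positions are jointly uniform,
each over the `M = 8 * (n choose 3)` possible clauses.
`IsDistribution D ∧ KWiseUniform n m k D` says `D ∈ 𝔇_k(n,m)`. -/
def KWiseUniform (n m k : ℕ) (D : SatInstance n m → ℝ) : Prop :=
  ∀ idx : Fin k → Fin m, Function.Injective idx →
    ∀ t : Fin k → Clause n,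
      pr D (fun C => ∀ j, C (idx j) = t j) = (1 / (8 * (n.choose 3 : ℝ))) ^ k

/-- `ξ(C)`: the number of unordered pairs `{i, j}` with `i ≠ j` and `c_i = c_j`. -/
noncomputable def xi {n m : ℕ} (C : SatInstance n m) : ℕ :=
  (Finset.univ.filter fun p : Fin m × Fin m => p.1 < p.2 ∧ C p.1 = C p.2).card

/-- An edge index of the bipartite multigraph `G(C)`: a clause position together with the
literal serving as the right endpoint (the left endpoint is the remaining literal pair). -/
abbrev EdgeIdx (n m : ℕ) := Fin m × Lit n

/-- `e` is an actual edge of the multigraph `G(C)`. -/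
def isEdge {n m : ℕ} (C : SatInstance n m) (e : EdgeIdx n m) : Prop :=
  e.2 ∈ (C e.1).1

/-- The left endpoint (pair of literals) of the edge `e` of `G(C)`. -/
def leftV {n m : ℕ} (C : SatInstance n m) (e : EdgeIdx n m) : Finset (Lit n) :=
  (C e.1).1.erase e.2

/-- `s` is a `K_{2,2}`-edge-set of the multigraph `G(C)`: four edges of the form
`u–v, u–v', u'–v, u'–v'` with `u ≠ u'` and `v ≠ v'`. -/
def IsK22 {n m : ℕ} (C : SatInstance n m) (s : Finset (EdgeIdx n m)) : Prop :=
  s.card = 4 ∧ (∀ e ∈ s, isEdge C e) ∧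
  ∃ u u' : Finset (Lit n), ∃ v v' : Lit n, u ≠ u' ∧ v ≠ v' ∧
    s.image (fun e => (leftV C e, e.2)) = {(u, v), (u, v'), (u', v), (u', v')}

/-- `κ(C)`: the number of `K_{2,2}`-edge-sets of the multigraph `G(C)`. -/
noncomputable def kappa {n m : ℕ} (C : SatInstance n m) : ℕ :=
  (Finset.univ.filter fun s : Finset (EdgeIdx n m) => IsK22 C s).card

/-- Adjacency in the simple bipartite graph `G(C̃)` of a set `T` of distinct clauses:
the literal pair `u` is adjacent to the literal `v`. -/
def adjSet {n : ℕ} (T : Finset (Clause n)) (u : Finset (Lit n)) (v : Lit n) : Prop :=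
  v ∉ u ∧ ∃ c ∈ T, c.1 = insert v u

/-- `κ(C̃)` for a set `T` of pairwise distinct clauses: the number of `K_{2,2}` subgraphs of
the simple bipartite graph `G(C̃)`, computed as `Σ_{{v,v'}} binom(|B_{v,v'}|, 2)`. -/
noncomputable def kappaSet {n : ℕ} (T : Finset (Clause n)) : ℕ :=
  ∑ p ∈ (Finset.univ : Finset (Lit n)).powersetCard 2,
    ((Finset.univ.filter fun u : Finset (Lit n) => ∀ v ∈ p, adjSet T u v).card).choose 2

/-- `m̃(C)`: the number of pairwise distinct clauses occurring in `C`. -/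
noncomputable def distinctCount {n m : ℕ} (C : SatInstance n m) : ℕ :=
  (Finset.univ.image C).card

/-- The set of the three variables of a clause. -/
def clVars {n : ℕ} (c : Clause n) : Finset (Fin n) := c.1.image Prod.fst

/-- `f` lists (the indices of) hyperedges of the variable hypergraph of `C` forming a
Berge path: consecutive hyperedges share exactly one vertex, non-consecutive ones
are disjoint. -/
def IsBergePathOrder {n m : ℕ} (C : SatInstance n m) {k : ℕ} (f : Fin k → Fin m) : Prop :=
  Function.Injective f ∧
  (∀ i j : Fin k, (j : ℕ) = (i : ℕ) + 1 →
    (clVars (C (f i)) ∩ clVars (C (f j))).card = 1) ∧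
  (∀ i j : Fin k, i ≠ j → (j : ℕ) ≠ (i : ℕ) + 1 → (i : ℕ) ≠ (j : ℕ) + 1 →
    Disjoint (clVars (C (f i))) (clVars (C (f j))))

/-- `j` follows `i` cyclically in `Fin ℓ`. -/
def CycConsec (ℓ : ℕ) (i j : Fin ℓ) : Prop := (j : ℕ) = ((i : ℕ) + 1) % ℓ

/-- `f` lists (the indices of) hyperedges of the variable hypergraph of `C` forming a
Berge cycle (of length `ℓ ≥ 3`): cyclically consecutive hyperedges share exactly one
vertex, non-consecutive ones are disjoint. -/
def IsBergeCycleOrder {n m : ℕ} (C : SatInstance n m) {ℓ : ℕ} (f : Fin ℓ → Fin m) : Prop :=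
  Function.Injective f ∧
  (∀ i j : Fin ℓ, CycConsec ℓ i j →
    (clVars (C (f i)) ∩ clVars (C (f j))).card = 1) ∧
  (∀ i j : Fin ℓ, i ≠ j → ¬ CycConsec ℓ i j → ¬ CycConsec ℓ j i →
    Disjoint (clVars (C (f i))) (clVars (C (f j))))

/-- The number of `k`-element sets of hyperedge indices of the variable hypergraph of `C`
that form a Berge path of length `k`. -/
noncomputable def bergePathSetCount (n m k : ℕ) (C : SatInstance n m) : ℕ :=
  (Finset.univ.filter fun s : Finset (Fin m) =>
    s.card = k ∧ ∃ f : Fin k → Fin m, (∀ i, f i ∈ s) ∧ IsBergePathOrder C f).card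

/-- The number of `ℓ`-element sets of hyperedge indices of the variable hypergraph of `C`
that form a Berge cycle of length `ℓ`. -/
noncomputable def bergeCycleSetCount (n m ℓ : ℕ) (C : SatInstance n m) : ℕ :=
  (Finset.univ.filter fun s : Finset (Fin m) =>
    s.card = ℓ ∧ ∃ f : Fin ℓ → Fin m, (∀ i, f i ∈ s) ∧ IsBergeCycleOrder C f).card

/-! Second moment of the number `Y(C)` of ordered pairs `(i, j)` with `c_i = c_j`, where
`M = 8·binom(n,3)`. Pairwise uniformity gives `E[Y] ≤ m + m²/M`. By Cauchy–Schwarz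
`Y(C) ≥ m²/s` whenever all clauses of `C` lie in a set of size `s`: always `s = M` works, and if
`σ` satisfies `C`, then `C` avoids the `M/8` clauses falsified by `σ`, so `s = 7M/8` works.
Hence `E[Y] ≥ m²/M + Pr[SAT]·m²/(7M)`, i.e. `Pr[SAT] ≤ 7M/m`. -/

open Finset

section Collisions

variable {ι β : Type*} [Fintype ι]

noncomputable def collisions (f : ι → β) : ℕ := #{p : ι × ι | f p.1 = f p.2}

theorem collisions_eq_sum_sq (f : ι → β) (s : Finset β) (hs : ∀ i, f i ∈ s) :
    collisions f = ∑ b ∈ s, #{i | f i = b} ^ 2 := by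
  rw [collisions, card_eq_sum_card_fiberwise (f := fun p : ι × ι => f p.1) fun p _ => hs p.1]
  refine sum_congr rfl fun b _ => ?_
  rw [sq, ← card_product]
  congr 1
  ext p
  simp only [mem_filter, mem_univ, true_and, mem_product]
  constructor
  · rintro ⟨h, rfl⟩; exact ⟨rfl, h.symm⟩
  · rintro ⟨h₁, h₂⟩; exact ⟨h₁.trans h₂.symm, h₁⟩

theorem sq_card_le_card_mul_collisions (f : ι → β) (s : Finset β) (hs : ∀ i, f i ∈ s) :
    Fintype.card ι ^ 2 ≤ #s * collisions f := by
  have hcard : Fintype.card ι = ∑ b ∈ s, #{i | f i = b} := by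
    simpa using card_eq_sum_card_fiberwise (s := univ) fun i _ => hs i
  rw [hcard, collisions_eq_sum_sq f s hs]
  exact sq_sum_le_card_mul_sum_sq

end Collisions

section WeightedProbability

variable {α : Type*} [Fintype α]

theorem pr_le_one {D : α → ℝ} (hD : IsDistribution D) (P : α → Prop) : pr D P ≤ 1 :=
  hD.2 ▸ sum_le_sum_of_subset_of_nonneg (filter_subset _ _) fun a _ _ => hD.1 a

theorem sum_pr_and_eq_pr {β : Type*} [Fintype β] (D : α → ℝ) (P : α → Prop) (g : α → β) :
    ∑ b, pr D (fun a => P a ∧ g a = b) = pr D P := by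
  unfold pr
  rw [← sum_fiberwise _ g D]
  congr! 2 with b
  ext a
  simp

theorem sum_mul_card_filter {ι : Type*} [Fintype ι] (D : α → ℝ) (P : α → ι → Prop) :
    ∑ a, D a * #{i | P a i} = ∑ i, pr D (fun a => P a i) := by
  simp only [card_filter, Nat.cast_sum, Nat.cast_ite, Nat.cast_one, Nat.cast_zero, mul_sum,
    mul_ite, mul_one, mul_zero, pr, sum_filter]
  exact sum_comm

theorem sum_mul_add_ite {D : α → ℝ} (hD : IsDistribution D) (P : α → Prop) (x y : ℝ) :
    ∑ a, D a * (x + if P a then y else 0) = x + y * pr D P := by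
  have hsplit : ∀ a, D a * (x + if P a then y else 0) = D a * x + y * if P a then D a else 0 :=
    fun a => by split_ifs <;> ring
  simp only [hsplit, sum_add_distrib, ← sum_mul, ← mul_sum, hD.2, one_mul, pr, sum_filter]

end WeightedProbability

section Falsified

variable {n : ℕ}

def falsifiedClause (σ : Fin n → Bool) (S : Finset (Fin n)) (hS : #S = 3) : Clause n :=
  ⟨S.image fun v => (v, !σ v),
    by rw [card_image_of_injective _ fun v w h => congrArg Prod.fst h, hS],
    by rw [image_image]; exact (image_id (s := S)).symm ▸ hS⟩

theorem clVars_falsifiedClause (σ : Fin n → Bool) (S : Finset (Fin n)) (hS : #S = 3) :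
    clVars (falsifiedClause σ S hS) = S := by
  simp [clVars, falsifiedClause, image_image, Function.comp_def]

theorem not_satisfies_falsifiedClause (σ : Fin n → Bool) (S : Finset (Fin n)) (hS : #S = 3) :
    ¬ Satisfies σ (falsifiedClause σ S hS) := by
  simp [Satisfies, falsifiedClause]

theorem choose_three_le_card_not_satisfies (σ : Fin n → Bool) :
    n.choose 3 ≤ #{t : Clause n | ¬ Satisfies σ t} := by
  have hinj : Function.Injective fun S : powersetCard 3 (univ : Finset (Fin n)) =>
      (⟨falsifiedClause σ S.1 (mem_powersetCard.1 S.2).2,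
        mem_filter.2 ⟨mem_univ _, not_satisfies_falsifiedClause _ _ _⟩⟩ :
        ({t : Clause n | ¬ Satisfies σ t} : Finset (Clause n))) := by
    intro S T h
    have := congrArg (fun t => clVars t.1) h
    simpa only [clVars_falsifiedClause, Subtype.ext_iff] using this
  simpa using card_le_card_of_injective hinj

end Falsified

section RandomInstances

variable {n m : ℕ}

theorem SAT.sq_add_choose_mul_collisions_le {C : SatInstance n m} (hC : SAT C) :
    m ^ 2 + n.choose 3 * collisions C ≤ Fintype.card (Clause n) * collisions C := by
  obtain ⟨σ, hσ⟩ := hC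
  have hcover : ∀ i, C i ∈ ({t | Satisfies σ t} : Finset (Clause n)) := fun i => by simp [hσ i]
  have hcard : #({t | Satisfies σ t} : Finset (Clause n)) + n.choose 3 ≤
      Fintype.card (Clause n) := by
    rw [← card_univ, ← card_filter_add_card_filter_not (s := univ) (p := Satisfies σ)]
    convert Nat.add_le_add_left (choose_three_le_card_not_satisfies σ) _
  have := sq_card_le_card_mul_collisions C _ hcover
  rw [Fintype.card_fin] at this
  nlinarith

variable {D : SatInstance n m → ℝ}

theorem KWiseUniform.pr_pair (h2 : KWiseUniform n m 2 D) {i j : Fin m} (hij : i ≠ j)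
    (t t' : Clause n) :
    pr D (fun C => C i = t ∧ C j = t') = (1 / (8 * (n.choose 3 : ℝ))) ^ 2 := by
  have hinj : Function.Injective ![i, j] := by
    intro a b hab
    fin_cases a <;> fin_cases b <;> simp_all [eq_comm]
  rw [← h2 ![i, j] hinj ![t, t']]
  simp [Fin.forall_fin_two]

/-- Summing the pair probabilities over all pairs of clauses gives `(#Clause / M)² = 1`. -/
theorem KWiseUniform.card_clause_eq (hD : IsDistribution D) (h2 : KWiseUniform n m 2 D)
    (hm : 2 ≤ m) : (Fintype.card (Clause n) : ℝ) = 8 * n.choose 3 := by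
  have hij : (⟨0, by omega⟩ : Fin m) ≠ ⟨1, by omega⟩ := by simp
  have htotal := sum_pr_and_eq_pr D (fun _ => True) fun C => (C ⟨0, by omega⟩, C ⟨1, by omega⟩)
  simp only [true_and, Prod.ext_iff, h2.pr_pair hij, sum_const, card_univ, Fintype.card_prod,
    nsmul_eq_mul] at htotal
  rw [pr, filter_true, hD.2, Nat.cast_mul, ← sq, ← mul_pow, mul_one_div] at htotal
  have hratio : (Fintype.card (Clause n) : ℝ) / (8 * n.choose 3) = 1 :=
    (pow_eq_one_iff_of_nonneg (by positivity) two_ne_zero).1 htotal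
  have hM : (8 * n.choose 3 : ℝ) ≠ 0 := by
    rintro hM
    simp [hM] at hratio
  exact (div_eq_one_iff_eq hM).1 hratio

theorem KWiseUniform.pr_collision (hD : IsDistribution D) (h2 : KWiseUniform n m 2 D)
    (hm : 2 ≤ m) {i j : Fin m} (hij : i ≠ j) :
    pr D (fun C => C i = C j) = 1 / (8 * (n.choose 3 : ℝ)) := by
  rw [← sum_pr_and_eq_pr D _ fun C => C i]
  calc ∑ t, pr D (fun C => C i = C j ∧ C i = t)
      = ∑ t, pr D (fun C => C i = t ∧ C j = t) := by
        congr! 3 with t C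
        exact ⟨fun ⟨h, h'⟩ => ⟨h', h ▸ h'⟩, fun ⟨h, h'⟩ => ⟨h.trans h'.symm, h⟩⟩
    _ = Fintype.card (Clause n) * (1 / (8 * (n.choose 3 : ℝ))) ^ 2 := by
        simp [h2.pr_pair hij]
    _ = 1 / (8 * (n.choose 3 : ℝ)) := by
        rw [h2.card_clause_eq hD hm]
        rcases eq_or_ne (8 * (n.choose 3 : ℝ)) 0 with hM | hM
        · simp [hM]
        · field_simp

theorem KWiseUniform.expected_collisions_le (hD : IsDistribution D) (h2 : KWiseUniform n m 2 D)
    (hm : 2 ≤ m) :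
    ∑ C, D C * collisions C ≤ m + m ^ 2 / (8 * n.choose 3 : ℝ) := by
  have hpair : ∀ p : Fin m × Fin m, pr D (fun C => C p.1 = C p.2) ≤
      (if p.1 = p.2 then 1 else 0) + 1 / (8 * n.choose 3 : ℝ) := by
    rintro ⟨i, j⟩
    by_cases hij : i = j
    · simpa [hij] using (pr_le_one hD _).trans (le_add_of_nonneg_right (by positivity))
    · simp [hij, h2.pr_collision hD hm hij]
  calc ∑ C, D C * collisions C = ∑ p : Fin m × Fin m, pr D (fun C => C p.1 = C p.2) :=
        sum_mul_card_filter D fun (C : SatInstance n m) (p : Fin m × Fin m) => C p.1 = C p.2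
    _ ≤ ∑ p : Fin m × Fin m, ((if p.1 = p.2 then 1 else 0) + 1 / (8 * n.choose 3 : ℝ)) :=
        sum_le_sum fun p _ => hpair p
    _ = m + m ^ 2 / (8 * n.choose 3 : ℝ) := by
        rw [Fintype.sum_prod_type]
        simp [sum_add_distrib]
        ring

theorem sq_div_add_ite_le_collisions (hK : (Fintype.card (Clause n) : ℝ) = 8 * n.choose 3)
    (hc : 0 < n.choose 3) (C : SatInstance n m) :
    (m : ℝ) ^ 2 / (8 * n.choose 3) + (if SAT C then (m : ℝ) ^ 2 / (56 * n.choose 3) else 0) ≤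
      collisions C := by
  have hc' : (0 : ℝ) < n.choose 3 := by exact_mod_cast hc
  by_cases hC : SAT C
  · have h : ((m ^ 2 + n.choose 3 * collisions C : ℕ) : ℝ) ≤
        (Fintype.card (Clause n) * collisions C : ℕ) := by
      exact_mod_cast hC.sq_add_choose_mul_collisions_le
    push_cast [hK] at h
    rw [if_pos hC, div_add_div _ _ (by positivity) (by positivity), div_le_iff₀ (by positivity)]
    nlinarith
  · have h : ((m ^ 2 : ℕ) : ℝ) ≤ (Fintype.card (Clause n) * collisions C : ℕ) := by
      have := sq_card_le_card_mul_collisions C univ fun i => mem_univ _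
      rw [Fintype.card_fin, card_univ] at this
      exact_mod_cast this
    push_cast [hK] at h
    rw [if_neg hC, add_zero, div_le_iff₀ (by positivity)]
    linarith

theorem KWiseUniform.pr_sat_le (hD : IsDistribution D) (h2 : KWiseUniform n m 2 D)
    (hc : 0 < n.choose 3) (hm : 2 ≤ m) : pr D SAT ≤ 56 * (n.choose 3 : ℝ) / m := by
  have hc' : (0 : ℝ) < n.choose 3 := by exact_mod_cast hc
  have hm' : (0 : ℝ) < m := by exact_mod_cast (by omega : 0 < m)
  have hlower : (m : ℝ) ^ 2 / (8 * n.choose 3) + (m : ℝ) ^ 2 / (56 * n.choose 3) * pr D SAT ≤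
      ∑ C, D C * collisions C := by
    rw [← sum_mul_add_ite hD]
    exact sum_le_sum fun C _ => mul_le_mul_of_nonneg_left
      (sq_div_add_ite_le_collisions (h2.card_clause_eq hD hm) hc C) (hD.1 C)
  have hkey : (m : ℝ) ^ 2 / (56 * n.choose 3) * pr D SAT ≤ m := by
    linarith [h2.expected_collisions_le hD hm]
  rw [div_mul_eq_mul_div, div_le_iff₀ (by positivity)] at hkey
  rw [le_div_iff₀ hm']
  nlinarith

end RandomInstances

/-- For all integers `n ≥ 3` and `m ≥ 56·binom(n,3)`, every probability distribution
`D ∈ 𝔇₂(n,m)` satisfies `Pr_{C∼D}[SAT(C)] ≤ 56·binom(n,3)/m`. -/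
theorem stmt0 (n m : ℕ) (hn : 3 ≤ n) (hm : 56 * n.choose 3 ≤ m)
    (D : SatInstance n m → ℝ) (hD : IsDistribution D) (h2 : KWiseUniform n m 2 D) :
    pr D SAT ≤ 56 * (n.choose 3 : ℝ) / m := by
  have hc : 0 < n.choose 3 := Nat.choose_pos hn
  exact h2.pr_sat_le hD hc (by omega)
end

section
/- For every integer n ≥ 4 there exists a probability distribution D in D_2(n, binom(n,3)) (i.e., with m = binom(n,3) clauses) such that Pr_{C∼D}[SAT(C)] ≥ 1 − binom(n,3)^{−1}. -/
open scoped Classical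

/-!
Mix two distributions on instances with `m = binom(n,3)` clauses. With weight `1 - 1/m`, a
uniformly random bijection puts one clause on each of the `m` variable triples, and the signs of
each clause, read relative to a hidden uniform assignment `τ`, form a uniformly random pattern of
odd weight; every such instance is satisfied by `!τ`. Two of these clauses have jointly uniform
signs, because the parities of `τ` on two distinct triples are independent fair bits. With weight
`1/m`, all clauses lie on one uniformly random triple and have independent uniform signs; this
branch produces the pairs of clauses on a common triple, which pairwise uniformity requires with
probability `1/m`.
-/

section FiniteProbability

open Finset

variable {Ω α β : Type*} [Fintype Ω] [Fintype α] [Fintype β]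

lemma pr_congr (D : α → ℝ) {P Q : α → Prop} (h : ∀ a, P a ↔ Q a) : pr D P = pr D Q := by
  rw [show P = Q from funext fun a => propext (h a)]

lemma pr_false (D : α → ℝ) : pr D (fun _ => False) = 0 := by
  simp [pr]

lemma pr_nonneg {D : α → ℝ} (hD : ∀ a, 0 ≤ D a) (P : α → Prop) : 0 ≤ pr D P :=
  sum_nonneg fun a _ => hD a

lemma IsDistribution.pr_true {D : α → ℝ} (hD : IsDistribution D) : pr D (fun _ => True) = 1 := by
  simpa [pr] using hD.2

noncomputable def pushforward (f : Ω → α) (D : Ω → ℝ) : α → ℝ :=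
  fun a => pr D (fun ω => f ω = a)

lemma pr_pushforward (f : Ω → α) (D : Ω → ℝ) (P : α → Prop) :
    pr (pushforward f D) P = pr D (fun ω => P (f ω)) := by
  unfold pr pushforward
  rw [← sum_fiberwise_of_maps_to (g := f) (t := univ.filter P)
    (fun ω hω => by simpa using hω)]
  refine sum_congr rfl fun a ha => sum_congr ?_ fun _ _ => rfl
  ext ω
  simp only [mem_filter, mem_univ, true_and] at ha ⊢
  exact ⟨fun h => ⟨h ▸ ha, h⟩, And.right⟩

lemma IsDistribution.pushforward {D : Ω → ℝ} (hD : IsDistribution D) (f : Ω → α) :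
    IsDistribution (pushforward f D) := by
  refine ⟨fun a => pr_nonneg hD.1 _, ?_⟩
  simpa [pr] using (pr_pushforward f D fun _ => True).trans hD.pr_true

noncomputable def uniformDist (Ω : Type*) [Fintype Ω] : Ω → ℝ :=
  fun _ => (Fintype.card Ω : ℝ)⁻¹

lemma uniformDist_nonneg (ω : Ω) : 0 ≤ uniformDist Ω ω := by
  unfold uniformDist
  positivity

lemma isDistribution_uniformDist [Nonempty Ω] : IsDistribution (uniformDist Ω) :=
  ⟨uniformDist_nonneg, by simp [uniformDist]⟩

lemma pr_uniformDist (P : Ω → Prop) :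
    pr (uniformDist Ω) P = Nat.card {ω // P ω} / Nat.card Ω := by
  simp [pr, uniformDist, Nat.card_eq_fintype_card, Fintype.card_subtype, div_eq_mul_inv]

lemma pr_uniformDist_eq (a : Ω) : pr (uniformDist Ω) (fun ω => ω = a) = (Nat.card Ω : ℝ)⁻¹ := by
  rw [pr_uniformDist, Nat.card_unique, Nat.cast_one, one_div]

lemma pr_uniformDist_comp_equiv (e : Ω ≃ α) (P : α → Prop) :
    pr (uniformDist Ω) (fun ω => P (e ω)) = pr (uniformDist α) P := by
  rw [pr_uniformDist, pr_uniformDist, Nat.card_congr e,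
    Nat.card_congr (e.subtypeEquiv fun _ => Iff.rfl)]

lemma pr_uniformDist_prod (R : α → β → Prop) :
    pr (uniformDist (α × β)) (fun x => R x.1 x.2)
      = ∑ a, pr (uniformDist β) (R a) / Nat.card α := by
  simp only [pr_uniformDist, Nat.card_congr (Equiv.subtypeProdEquivSigmaSubtype R),
    Nat.card_sigma, Nat.card_prod, Nat.cast_sum, Nat.cast_mul, sum_div, div_div, mul_comm]

lemma pr_uniformDist_prod_and (P : α → Prop) (Q : β → Prop) :
    pr (uniformDist (α × β)) (fun x => P x.1 ∧ Q x.2)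
      = pr (uniformDist α) P * pr (uniformDist β) Q := by
  rw [pr_uniformDist, pr_uniformDist, pr_uniformDist, Nat.card_congr Equiv.subtypeProdEquivProd,
    Nat.card_prod, Nat.card_prod, Nat.cast_mul, Nat.cast_mul, mul_div_mul_comm]

lemma pr_uniformDist_pi {ι X : Type*} [Fintype ι] [DecidableEq ι] [Fintype X]
    (P : ι → X → Prop) :
    pr (uniformDist (ι → X)) (fun r => ∀ i, P i (r i)) = ∏ i, pr (uniformDist X) (P i) := by
  rw [pr_uniformDist, Nat.card_congr Equiv.subtypePiEquivPi, Nat.card_pi, Nat.card_pi]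
  simp only [pr_uniformDist, Nat.cast_prod, prod_div_distrib]

lemma pr_uniformDist_pi_pair {ι X : Type*} [Fintype ι] [DecidableEq ι] [Fintype X] [Nonempty X]
    {i₁ i₂ : ι} (hne : i₁ ≠ i₂) (P Q : X → Prop) :
    pr (uniformDist (ι → X)) (fun r => P (r i₁) ∧ Q (r i₂))
      = pr (uniformDist X) P * pr (uniformDist X) Q := by
  have key : ∀ i, pr (uniformDist X) (fun x => (i = i₁ → P x) ∧ (i = i₂ → Q x))
      = (if i = i₁ then pr (uniformDist X) P else 1)
        * (if i = i₂ then pr (uniformDist X) Q else 1) := by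
    intro i
    by_cases h₁ : i = i₁ <;> by_cases h₂ : i = i₂
    · exact absurd (h₁.symm.trans h₂) hne
    all_goals simp [h₁, h₂, hne, hne.symm, isDistribution_uniformDist.pr_true]
  rw [pr_congr _ (Q := fun r => ∀ i, (i = i₁ → P (r i)) ∧ (i = i₂ → Q (r i))),
    pr_uniformDist_pi (fun i x => (i = i₁ → P x) ∧ (i = i₂ → Q x)),
    Finset.prod_congr rfl fun i _ => key i, prod_mul_distrib, prod_ite_eq', prod_ite_eq']
  · simp
  · intro r
    exact ⟨fun h i => ⟨fun hi => hi ▸ h.1, fun hi => hi ▸ h.2⟩,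
      fun h => ⟨(h i₁).1 rfl, (h i₂).2 rfl⟩⟩

def mixture (w : ℝ) (D₁ D₂ : α → ℝ) : α → ℝ := fun a => (1 - w) * D₁ a + w * D₂ a

lemma pr_mixture (w : ℝ) (D₁ D₂ : α → ℝ) (P : α → Prop) :
    pr (mixture w D₁ D₂) P = (1 - w) * pr D₁ P + w * pr D₂ P := by
  simp only [pr, mixture, sum_add_distrib, mul_sum]

lemma IsDistribution.mixture {w : ℝ} {D₁ D₂ : α → ℝ} (h₁ : IsDistribution D₁)
    (h₂ : IsDistribution D₂) (hw₀ : 0 ≤ w) (hw₁ : w ≤ 1) : IsDistribution (mixture w D₁ D₂) := by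
  refine ⟨fun a => add_nonneg (mul_nonneg (by linarith) (h₁.1 a)) (mul_nonneg hw₀ (h₂.1 a)), ?_⟩
  simp only [_root_.mixture, sum_add_distrib, ← mul_sum, h₁.2, h₂.2]
  ring

end FiniteProbability

section Symmetry

open Finset

lemma exists_perm_apply_pair_eq {β : Type*} [DecidableEq β] {b₁ b₂ c₁ c₂ : β} (hb : b₁ ≠ b₂)
    (hc : c₁ ≠ c₂) :
    ∃ g : Equiv.Perm β, g b₁ = c₁ ∧ g b₂ = c₂ := by
  have hb' : Equiv.swap b₁ c₁ b₂ ≠ c₁ := fun h =>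
    hb ((Equiv.swap b₁ c₁).injective (h.trans (Equiv.swap_apply_left b₁ c₁).symm)).symm
  refine ⟨(Equiv.swap b₁ c₁).trans (Equiv.swap (Equiv.swap b₁ c₁ b₂) c₂), ?_, ?_⟩
  · simp only [Equiv.trans_apply, Equiv.swap_apply_left]
    exact Equiv.swap_apply_of_ne_of_ne hb'.symm hc
  · simp only [Equiv.trans_apply]
    exact Equiv.swap_apply_left _ _

lemma pr_uniformDist_equiv_apply_pair {α β : Type*} [Fintype α] [Fintype β] [DecidableEq α]
    [DecidableEq β] [Nonempty (α ≃ β)] {a₁ a₂ : α} (ha : a₁ ≠ a₂) {b₁ b₂ : β} (hb : b₁ ≠ b₂) :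
    pr (uniformDist (α ≃ β)) (fun π => π a₁ = b₁ ∧ π a₂ = b₂)
      = ((Nat.card β : ℝ) * (Nat.card β - 1))⁻¹ := by
  set p := pr (uniformDist (α ≃ β)) (fun π => π a₁ = b₁ ∧ π a₂ = b₂)
  -- Composing with a permutation of `β` moves `(b₁, b₂)` to any pair of distinct values, so all
  -- such pairs are equally likely.
  have hpair : ∀ c : β × β, pushforward (fun π : α ≃ β => (π a₁, π a₂)) (uniformDist _) c
      = if c.1 = c.2 then 0 else p := by
    rintro ⟨c₁, c₂⟩
    dsimp only
    split_ifs with hc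
    · refine (pr_congr _ fun π => ?_).trans (pr_false _)
      simp only [Prod.mk.injEq, iff_false, not_and]
      exact fun h₁ h₂ => ha (π.injective (by rw [h₁, h₂, hc]))
    · obtain ⟨g, hg₁, hg₂⟩ := exists_perm_apply_pair_eq hb hc
      unfold pushforward
      rw [← pr_uniformDist_comp_equiv ((Equiv.refl α).equivCongr g)]
      refine pr_congr _ fun π => ?_
      simp only [Equiv.equivCongr_apply_apply, Equiv.refl_symm, Equiv.refl_apply, ← hg₁, ← hg₂,
        Prod.mk.injEq, EmbeddingLike.apply_eq_iff_eq]
  have hsum := (isDistribution_uniformDist.pushforward fun π : α ≃ β => (π a₁, π a₂)).2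
  simp only [hpair, Fintype.sum_prod_type] at hsum
  have hinner : ∀ c₁ : β, ∑ c₂, (if c₁ = c₂ then (0 : ℝ) else p) = (Nat.card β - 1) * p := by
    intro c₁
    rw [Finset.sum_ite, sum_const_zero, zero_add, sum_const, Finset.filter_ne,
      card_erase_of_mem (mem_univ _), card_univ, nsmul_eq_mul,
      Nat.cast_pred (Fintype.card_pos_iff.2 ⟨c₁⟩), Nat.card_eq_fintype_card]
  simp only [hinner, Finset.sum_const, Finset.card_univ, nsmul_eq_mul, ← mul_assoc,
    ← Nat.card_eq_fintype_card] at hsum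
  exact eq_inv_of_mul_eq_one_right hsum

end Symmetry

section Parity

open Finset

variable {ι : Type*} [DecidableEq ι]

def parity (W : Finset ι) (τ : ι → Bool) : ZMod 2 := ∑ v ∈ W, ((τ v).toNat : ZMod 2)

lemma Bool.toNat_not_cast_zmod_two (b : Bool) : ((!b).toNat : ZMod 2) = (b.toNat : ZMod 2) + 1 := by
  cases b <;> decide

lemma parity_update_not (W : Finset ι) (τ : ι → Bool) (u : ι) :
    parity W (Function.update τ u (!τ u)) = parity W τ + if u ∈ W then 1 else 0 := by
  have hrest : ∀ s : Finset ι, u ∉ s → parity s (Function.update τ u (!τ u)) = parity s τ :=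
    fun s hs => sum_congr rfl fun v hv => by rw [Function.update_of_ne (ne_of_mem_of_not_mem hv hs)]
  split_ifs with hu
  · rw [parity, parity, ← add_sum_erase _ _ hu, ← add_sum_erase _ _ hu, Function.update_self,
      Bool.toNat_not_cast_zmod_two]
    have := hrest _ (notMem_erase u W)
    unfold parity at this
    rw [this]
    ring
  · rw [hrest W hu, add_zero]

def flipAt (u : ι) : Equiv.Perm (ι → Bool) :=
  Function.Involutive.toPerm (fun τ => Function.update τ u (!τ u)) fun τ => by
    ext v
    by_cases hv : v = u
    · subst hv; simp
    · simp [Function.update_of_ne hv]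

lemma flipAt_apply (u : ι) (τ : ι → Bool) : flipAt u τ = Function.update τ u (!τ u) := rfl

lemma pr_parity_pair [Fintype ι] {W₀ W₁ : Finset ι} {u w : ι} (hu₀ : u ∈ W₀) (hu₁ : u ∉ W₁)
    (hw₁ : w ∈ W₁) (hw₀ : w ∉ W₀) (c₀ c₁ : ZMod 2) :
    pr (uniformDist (ι → Bool)) (fun τ => parity W₀ τ = c₀ ∧ parity W₁ τ = c₁) = 1 / 4 := by
  -- Flipping `u` toggles only the first parity and flipping `w` only the second, so the four
  -- outcomes are equally likely.
  set p : ZMod 2 → ZMod 2 → ℝ :=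
    fun c d => pr (uniformDist (ι → Bool)) (fun τ => parity W₀ τ = c ∧ parity W₁ τ = d) with hp
  have shift₀ : ∀ c d, p (c + 1) d = p c d := by
    intro c d
    simp only [hp]
    rw [← pr_uniformDist_comp_equiv (flipAt u)]
    refine pr_congr _ fun τ => ?_
    simp [flipAt_apply, parity_update_not, hu₀, hu₁]
  have shift₁ : ∀ c d, p c (d + 1) = p c d := by
    intro c d
    simp only [hp]
    rw [← pr_uniformDist_comp_equiv (flipAt w)]
    refine pr_congr _ fun τ => ?_
    simp [flipAt_apply, parity_update_not, hw₀, hw₁]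
  have hall : ∀ c d, p c d = p c₀ c₁ := by
    have h : ∀ x y : ZMod 2, x = y ∨ x = y + 1 := by decide
    intro c d
    rcases h c c₀ with rfl | rfl <;> rcases h d c₁ with rfl | rfl <;> simp only [shift₀, shift₁]
  have hsum := (isDistribution_uniformDist.pushforward fun τ : ι → Bool =>
    (parity W₀ τ, parity W₁ τ)).2
  simp only [Fintype.sum_prod_type, pushforward, Prod.mk.injEq] at hsum
  change ∑ c, ∑ d, p c d = 1 at hsum
  simp only [hall, sum_const, card_univ, ZMod.card, nsmul_eq_mul, Nat.cast_ofNat] at hsum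
  change p c₀ c₁ = 1 / 4
  linarith

end Parity

section Clauses

open Finset

variable {n : ℕ}

abbrev TriSet (n : ℕ) := {V : Finset (Fin n) // V.card = 3}

/-- The increasing enumeration of a triple of variables: through it, the clauses on a triple `V`
are indexed by their sign patterns `Fin 3 → Bool`. -/
def TriSet.emb (V : TriSet n) : Fin 3 ↪o Fin n := V.1.orderEmbOfFin V.2

lemma TriSet.image_emb (V : TriSet n) : univ.image V.emb = V.1 :=
  V.1.image_orderEmbOfFin_univ V.2

lemma TriSet.exists_emb_eq_iff (V : TriSet n) (v : Fin n) : (∃ q, V.emb q = v) ↔ v ∈ V.1 := by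
  rw [← V.image_emb, mem_image]
  simp

lemma TriSet.sum_emb {M : Type*} [AddCommMonoid M] (V : TriSet n) (g : Fin n → M) :
    ∑ q, g (V.emb q) = ∑ v ∈ V.1, g v := by
  rw [← V.image_emb, sum_image fun q _ q' _ h => V.emb.injective h]

def clauseOf (V : TriSet n) (f : Fin 3 → Bool) : Clause n :=
  ⟨univ.image fun q => (V.emb q, f q), by
    refine ⟨?_, by rw [image_image]; exact (congrArg card V.image_emb).trans V.2⟩
    rw [card_image_of_injective _ fun q q' h => V.emb.injective (congrArg Prod.fst h), card_univ,
      Fintype.card_fin]⟩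

lemma mem_clauseOf (V : TriSet n) (f : Fin 3 → Bool) (ℓ : Lit n) :
    ℓ ∈ (clauseOf V f).1 ↔ ∃ q, (V.emb q, f q) = ℓ := by
  simp [clauseOf]

def triOf (c : Clause n) : TriSet n := ⟨clVars c, c.2.2⟩

def clSgn (c : Clause n) (v : Fin n) : Bool := decide ((v, true) ∈ c.1)

def signPattern (c : Clause n) (q : Fin 3) : Bool := clSgn c ((triOf c).emb q)

lemma mem_clause_iff (c : Clause n) (v : Fin n) (b : Bool) :
    (v, b) ∈ c.1 ↔ v ∈ clVars c ∧ clSgn c v = b := by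
  have hinj : Set.InjOn Prod.fst (c.1 : Set (Lit n)) := card_image_iff.1 (c.2.2.trans c.2.1.symm)
  constructor
  · intro h
    refine ⟨mem_image_of_mem Prod.fst h, ?_⟩
    cases b
    · simpa [clSgn] using fun ht => Bool.true_eq_false ▸ congrArg Prod.snd (hinj ht h rfl)
    · simp [clSgn, h]
  · rintro ⟨hv, rfl⟩
    obtain ⟨⟨v, b⟩, hb, rfl⟩ := mem_image.1 hv
    by_cases ht : (v, true) ∈ c.1
    · simp [clSgn, ht]
    · cases b
      · simpa [clSgn, ht] using hb
      · exact absurd hb ht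

lemma triOf_clauseOf (V : TriSet n) (f : Fin 3 → Bool) : triOf (clauseOf V f) = V := by
  refine Subtype.ext ?_
  simp only [triOf, clVars, clauseOf, image_image]
  exact V.image_emb

lemma signPattern_clauseOf (V : TriSet n) (f : Fin 3 → Bool) : signPattern (clauseOf V f) = f := by
  funext q
  rw [signPattern, triOf_clauseOf]
  exact ((mem_clause_iff _ _ _).1 ((mem_clauseOf V f _).2 ⟨q, rfl⟩)).2

lemma clauseOf_triOf_signPattern (c : Clause n) : clauseOf (triOf c) (signPattern c) = c := by
  refine Subtype.ext (Finset.ext fun ⟨v, b⟩ => ?_)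
  rw [mem_clauseOf, mem_clause_iff, show clVars c = (triOf c).1 from rfl,
    ← (triOf c).exists_emb_eq_iff]
  simp only [signPattern, Prod.mk.injEq]
  constructor
  · rintro ⟨q, rfl, rfl⟩
    exact ⟨⟨q, rfl⟩, rfl⟩
  · rintro ⟨⟨q, rfl⟩, rfl⟩
    exact ⟨q, rfl, rfl⟩

lemma clauseOf_eq_iff (V : TriSet n) (f : Fin 3 → Bool) (c : Clause n) :
    clauseOf V f = c ↔ V = triOf c ∧ f = signPattern c := by
  constructor
  · rintro rfl
    exact ⟨(triOf_clauseOf V f).symm, (signPattern_clauseOf V f).symm⟩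
  · rintro ⟨rfl, rfl⟩
    exact clauseOf_triOf_signPattern c

lemma satisfies_clauseOf_iff (σ : Fin n → Bool) (V : TriSet n) (f : Fin 3 → Bool) :
    Satisfies σ (clauseOf V f) ↔ ∃ q, σ (V.emb q) = f q := by
  simp [Satisfies, mem_clauseOf]

end Clauses

section Construction

open Finset

variable {n m : ℕ}

lemma TriSet.card : Nat.card (TriSet n) = n.choose 3 := by
  rw [Nat.card_eq_fintype_card, Fintype.card_finset_len, Fintype.card_fin]

lemma TriSet.exists_mem_notMem_of_ne {V W : TriSet n} (h : V ≠ W) : ∃ u ∈ V.1, u ∉ W.1 := by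
  by_contra! hsub
  exact h (Subtype.ext (eq_of_subset_of_card_le hsub (by rw [V.2, W.2])))

def oddPattern (p : Bool × Bool) : Fin 3 → Bool := ![p.1, p.2, !(xor p.1 p.2)]

lemma exists_oddPattern_eq_true (p : Bool × Bool) : ∃ q, oddPattern p q = true := by
  revert p
  decide

lemma card_oddPattern_eq (F : Fin 3 → Bool) :
    Fintype.card {p // oddPattern p = F} = if ∑ q, ((F q).toNat : ZMod 2) = 1 then 1 else 0 := by
  revert F
  decide

lemma pr_oddPattern_eq (F : Fin 3 → Bool) :
    pr (uniformDist (Bool × Bool)) (fun p => oddPattern p = F)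
      = if ∑ q, ((F q).toNat : ZMod 2) = 1 then 1 / 4 else 0 := by
  rw [pr_uniformDist, Nat.card_eq_fintype_card, card_oddPattern_eq]
  split_ifs <;> simp

lemma Bool.toNat_xor_cast_zmod_two (a b : Bool) :
    ((xor a b).toNat : ZMod 2) = (a.toNat : ZMod 2) + (b.toNat : ZMod 2) := by
  cases a <;> cases b <;> decide

/-- The signs of `t`, read relative to the assignment `τ`: a literal of `t` is true under `!τ`
exactly where this pattern is `true`. -/
def relPattern (t : Clause n) (τ : Fin n → Bool) (q : Fin 3) : Bool :=
  xor (τ ((triOf t).emb q)) (signPattern t q)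

lemma sum_relPattern (t : Clause n) (τ : Fin n → Bool) :
    ∑ q, ((relPattern t τ q).toNat : ZMod 2)
      = parity (clVars t) τ + ∑ q, ((signPattern t q).toNat : ZMod 2) := by
  simp only [relPattern, Bool.toNat_xor_cast_zmod_two, sum_add_distrib, parity]
  rw [(triOf t).sum_emb fun v => ((τ v).toNat : ZMod 2)]
  rfl

lemma pr_oddPattern_eq_relPattern_pair {i₁ i₂ : Fin m} (hi : i₁ ≠ i₂) {t₀ t₁ : Clause n}
    (ht : triOf t₀ ≠ triOf t₁) :
    pr (uniformDist ((Fin n → Bool) × (Fin m → Bool × Bool)))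
        (fun x => oddPattern (x.2 i₁) = relPattern t₀ x.1 ∧ oddPattern (x.2 i₂) = relPattern t₁ x.1)
      = 1 / 64 := by
  obtain ⟨u, hu₀, hu₁⟩ := TriSet.exists_mem_notMem_of_ne ht
  obtain ⟨w, hw₁, hw₀⟩ := TriSet.exists_mem_notMem_of_ne (Ne.symm ht)
  set s₀ := ∑ q, ((signPattern t₀ q).toNat : ZMod 2)
  set s₁ := ∑ q, ((signPattern t₁ q).toNat : ZMod 2)
  have hpar : pr (uniformDist (Fin n → Bool))
      (fun τ => parity (clVars t₀) τ + s₀ = 1 ∧ parity (clVars t₁) τ + s₁ = 1) = 1 / 4 := by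
    have h := pr_parity_pair hu₀ hu₁ hw₁ hw₀ (1 - s₀) (1 - s₁)
    simp only [eq_sub_iff_add_eq] at h
    exact h
  rw [pr_uniformDist_prod fun (τ : Fin n → Bool) (r : Fin m → Bool × Bool) =>
      oddPattern (r i₁) = relPattern t₀ τ ∧ oddPattern (r i₂) = relPattern t₁ τ]
  calc _ = ∑ τ, (if parity (clVars t₀) τ + s₀ = 1 then (1 / 4 : ℝ) else 0)
            * (if parity (clVars t₁) τ + s₁ = 1 then 1 / 4 else 0) / Nat.card (Fin n → Bool) := by
        refine sum_congr rfl fun τ _ => ?_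
        rw [pr_uniformDist_pi_pair hi (fun x => oddPattern x = relPattern t₀ τ)
          (fun x => oddPattern x = relPattern t₁ τ), pr_oddPattern_eq, pr_oddPattern_eq,
          sum_relPattern, sum_relPattern]
    _ = 1 / 16 * pr (uniformDist (Fin n → Bool))
          (fun τ => parity (clVars t₀) τ + s₀ = 1 ∧ parity (clVars t₁) τ + s₁ = 1) := by
        rw [pr, sum_filter, mul_sum]
        refine sum_congr rfl fun τ _ => ?_
        rw [ite_zero_mul_ite_zero]
        split_ifs <;> simp [uniformDist, Nat.card_eq_fintype_card]
        ring
    _ = 1 / 64 := by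
        rw [hpar]
        norm_num

instance : Nonempty (Fin (n.choose 3) ≃ TriSet n) :=
  ⟨(Finite.equivFinOfCardEq TriSet.card).symm⟩

abbrev PlantedSample (n : ℕ) :=
  (Fin (n.choose 3) ≃ TriSet n) × (Fin n → Bool) × (Fin (n.choose 3) → Bool × Bool)

def plantedInstance (ω : PlantedSample n) : SatInstance n (n.choose 3) := fun i =>
  clauseOf (ω.1 i) fun q => xor (ω.2.1 ((ω.1 i).emb q)) (oddPattern (ω.2.2 i) q)

abbrev SameTripleSample (n m : ℕ) := TriSet n × (Fin m → Fin 3 → Bool)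

def sameTripleInstance (ω : SameTripleSample n m) : SatInstance n m := fun i =>
  clauseOf ω.1 (ω.2 i)

lemma plantedInstance_eq_iff (ω : PlantedSample n) (i : Fin (n.choose 3)) (t : Clause n) :
    plantedInstance ω i = t ↔ ω.1 i = triOf t ∧ oddPattern (ω.2.2 i) = relPattern t ω.2.1 := by
  rw [plantedInstance, clauseOf_eq_iff]
  refine and_congr_right fun h => ?_
  rw [h, funext_iff, funext_iff]
  refine forall_congr' fun q => ?_
  rw [relPattern]
  cases ω.2.1 ((triOf t).emb q) <;> cases oddPattern (ω.2.2 i) q <;> cases signPattern t q <;>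
    decide

lemma sat_plantedInstance (ω : PlantedSample n) : SAT (plantedInstance ω) := by
  refine ⟨fun v => !ω.2.1 v, fun i => (satisfies_clauseOf_iff _ _ _).2 ?_⟩
  obtain ⟨q, hq⟩ := exists_oddPattern_eq_true (ω.2.2 i)
  exact ⟨q, by simp [hq]⟩

lemma pr_plantedInstance_pair {i₁ i₂ : Fin (n.choose 3)} (hi : i₁ ≠ i₂) (t₀ t₁ : Clause n) :
    pr (uniformDist (PlantedSample n))
        (fun ω => plantedInstance ω i₁ = t₀ ∧ plantedInstance ω i₂ = t₁)
      = if triOf t₀ = triOf t₁ then 0 else ((n.choose 3 : ℝ) * (n.choose 3 - 1) * 64)⁻¹ := by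
  rw [pr_congr _ (Q := fun ω => (ω.1 i₁ = triOf t₀ ∧ ω.1 i₂ = triOf t₁) ∧
      (oddPattern (ω.2.2 i₁) = relPattern t₀ ω.2.1 ∧ oddPattern (ω.2.2 i₂) = relPattern t₁ ω.2.1))
      fun ω => by rw [plantedInstance_eq_iff, plantedInstance_eq_iff]; tauto,
    pr_uniformDist_prod_and
      (fun π : Fin (n.choose 3) ≃ TriSet n => π i₁ = triOf t₀ ∧ π i₂ = triOf t₁)
      fun x : (Fin n → Bool) × (Fin (n.choose 3) → Bool × Bool) =>
        oddPattern (x.2 i₁) = relPattern t₀ x.1 ∧ oddPattern (x.2 i₂) = relPattern t₁ x.1]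
  split_ifs with ht
  · rw [pr_congr _ (Q := fun _ => False) fun π => ?_, pr_false, zero_mul]
    simp only [ht, iff_false, not_and]
    exact fun h₁ h₂ => hi (π.injective (h₁.trans h₂.symm))
  · rw [pr_uniformDist_equiv_apply_pair hi ht, pr_oddPattern_eq_relPattern_pair hi ht, TriSet.card]
    field_simp

lemma pr_sameTripleInstance_pair {i₁ i₂ : Fin m} (hi : i₁ ≠ i₂) (t₀ t₁ : Clause n) :
    pr (uniformDist (SameTripleSample n m))
        (fun ω => sameTripleInstance ω i₁ = t₀ ∧ sameTripleInstance ω i₂ = t₁)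
      = if triOf t₀ = triOf t₁ then ((n.choose 3 : ℝ) * 64)⁻¹ else 0 := by
  simp only [sameTripleInstance, clauseOf_eq_iff]
  split_ifs with ht
  · rw [pr_congr _ (Q := fun ω => ω.1 = triOf t₀ ∧
        (ω.2 i₁ = signPattern t₀ ∧ ω.2 i₂ = signPattern t₁)) fun ω => by rw [← ht]; tauto,
      pr_uniformDist_prod_and (· = triOf t₀) fun s : Fin m → Fin 3 → Bool =>
        s i₁ = signPattern t₀ ∧ s i₂ = signPattern t₁,
      pr_uniformDist_pi_pair hi (· = signPattern t₀) (· = signPattern t₁),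
      pr_uniformDist_eq, pr_uniformDist_eq, pr_uniformDist_eq, TriSet.card]
    simp [Nat.card_eq_fintype_card]
    ring
  · refine (pr_congr _ fun ω => iff_false_intro ?_).trans (pr_false _)
    rintro ⟨⟨h₁, -⟩, h₂, -⟩
    exact ht (h₁.symm.trans h₂)

noncomputable def satDist (n : ℕ) : SatInstance n (n.choose 3) → ℝ :=
  mixture (n.choose 3 : ℝ)⁻¹ (pushforward plantedInstance (uniformDist (PlantedSample n)))
    (pushforward sameTripleInstance (uniformDist (SameTripleSample n (n.choose 3))))

lemma isDistribution_satDist (hn : 3 ≤ n) : IsDistribution (satDist n) := by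
  have hm : (1 : ℝ) ≤ n.choose 3 := by exact_mod_cast Nat.choose_pos hn
  have : Nonempty (TriSet n) :=
    ⟨(Finite.equivFinOfCardEq TriSet.card).symm ⟨0, Nat.choose_pos hn⟩⟩
  exact (isDistribution_uniformDist.pushforward _).mixture
    (isDistribution_uniformDist.pushforward _) (by positivity) (inv_le_one_of_one_le₀ hm)

lemma pr_satDist_pair {i₁ i₂ : Fin (n.choose 3)} (hi : i₁ ≠ i₂) (t₀ t₁ : Clause n) :
    pr (satDist n) (fun C => C i₁ = t₀ ∧ C i₂ = t₁) = (1 / (8 * (n.choose 3 : ℝ))) ^ 2 := by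
  have hm : (2 : ℝ) ≤ n.choose 3 := by
    exact_mod_cast (Fintype.one_lt_card_iff.2 ⟨i₁, i₂, hi⟩).trans_eq (Fintype.card_fin _)
  have hm₁ : (n.choose 3 : ℝ) - 1 ≠ 0 := by linarith
  rw [satDist, pr_mixture, pr_pushforward, pr_pushforward, pr_plantedInstance_pair hi,
    pr_sameTripleInstance_pair hi]
  split_ifs <;> field_simp <;> ring

lemma kWiseUniform_two_satDist (n : ℕ) : KWiseUniform n (n.choose 3) 2 (satDist n) := by
  intro idx hidx t
  rw [pr_congr _ (Q := fun C => C (idx 0) = t 0 ∧ C (idx 1) = t 1) fun C => Fin.forall_fin_two]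
  exact pr_satDist_pair (hidx.ne (by decide)) (t 0) (t 1)

lemma one_sub_inv_le_pr_sat_satDist (n : ℕ) : 1 - (n.choose 3 : ℝ)⁻¹ ≤ pr (satDist n) SAT := by
  have hA : pr (pushforward plantedInstance (uniformDist (PlantedSample n))) SAT = 1 := by
    rw [pr_pushforward, pr_congr _ fun ω => iff_true_intro (sat_plantedInstance ω)]
    exact isDistribution_uniformDist.pr_true
  have hB : 0 ≤ pr (pushforward (sameTripleInstance (m := n.choose 3))
      (uniformDist (SameTripleSample n _))) SAT :=
    pr_nonneg (fun C => pr_nonneg uniformDist_nonneg _) SAT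
  rw [satDist, pr_mixture, hA]
  have := mul_nonneg (inv_nonneg.2 (Nat.cast_nonneg (n.choose 3) : (0 : ℝ) ≤ _)) hB
  linarith

end Construction

/-- For every integer `n ≥ 4` there exists a distribution `D ∈ 𝔇₂(n, binom(n,3))`
with `Pr_{C∼D}[SAT(C)] ≥ 1 − binom(n,3)⁻¹`. -/
theorem stmt1 (n : ℕ) (hn : 4 ≤ n) :
    ∃ D : SatInstance n (n.choose 3) → ℝ,
      IsDistribution D ∧ KWiseUniform n (n.choose 3) 2 D ∧
      1 - (n.choose 3 : ℝ)⁻¹ ≤ pr D SAT :=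
  ⟨satDist n, isDistribution_satDist (by omega), kWiseUniform_two_satDist n,
    one_sub_inv_le_pr_sat_satDist n⟩
end

section
/- If a 3-SAT instance C with m clauses over n ≥ 3 variables is satisfiable, then ξ(C) ≥ (m/2)·( (8/7)·m/(8·binom(n,3)) − 1 ) = (m/2)·( m/(7·binom(n,3)) − 1 ). -/
open scoped Classical

/-
Group the clauses of `C` by value. If the distinct clauses occur with multiplicities `f_c`, then
`∑ f_c = m` and `∑ f_c² = m + 2ξ(C)`, so Cauchy–Schwarz gives `m² ≤ m̃ · (m + 2ξ(C))`, where `m̃` is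
the number of distinct clauses. A clause is determined by its variable set and its signs, and
on each of the `binom(n,3)` variable sets exactly one sign pattern is falsified by a satisfying
assignment `σ`; hence `m̃ ≤ 7·binom(n,3)`.
-/

open Finset

namespace Clause

variable {n : ℕ}

def sign (c : Clause n) (v : Fin n) : Bool := decide ((v, true) ∈ c.1)

theorem sign_eq_of_mem {c : Clause n} {ℓ : Lit n} (hℓ : ℓ ∈ c.1) : c.sign ℓ.1 = ℓ.2 := by
  have hinj : Set.InjOn Prod.fst (c.1 : Set (Lit n)) :=
    injOn_of_card_image_eq (c.2.2.trans c.2.1.symm)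
  obtain ⟨v, b⟩ := ℓ
  cases b with
  | true => simpa [sign] using hℓ
  | false =>
    simp only [sign, decide_eq_false_iff_not]
    intro htrue
    exact Bool.false_ne_true (congrArg Prod.snd (hinj hℓ htrue rfl))

theorem val_eq_image_sign (c : Clause n) : c.1 = (clVars c).image fun v => (v, c.sign v) := by
  ext ℓ
  simp only [clVars, mem_image]
  constructor
  · intro hℓ
    exact ⟨ℓ.1, ⟨ℓ, hℓ, rfl⟩, by rw [sign_eq_of_mem hℓ]⟩
  · rintro ⟨_, ⟨ℓ', hℓ', rfl⟩, rfl⟩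
    rwa [sign_eq_of_mem hℓ']

theorem ext_of_clVars_of_sign {c c' : Clause n} (hV : clVars c = clVars c')
    (hsign : ∀ v ∈ clVars c, c.sign v = c'.sign v) : c = c' :=
  Subtype.ext <| by
    rw [val_eq_image_sign c, val_eq_image_sign c', ← hV]
    exact image_congr fun v hv => by rw [hsign v hv]

end Clause

section SatisfiedClauses

variable {n : ℕ}

theorem card_satisfied_clauses_on_vars_le (σ : Fin n → Bool) {V : Finset (Fin n)}
    (hV : #V = 3) : #{c : Clause n | Satisfies σ c ∧ clVars c = V} ≤ 7 := by
  have hcard : #((univ : Finset (V → Bool)).erase fun v => !σ v) = 7 := by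
    rw [card_erase_of_mem (mem_univ _), card_univ, Fintype.card_fun, Fintype.card_coe, hV]
    rfl
  rw [← hcard]
  refine card_le_card_of_injOn (fun c (v : V) => c.sign v) (fun c hc => ?_) ?_
  · simp only [coe_filter, mem_univ, true_and, Set.mem_ofPred_eq] at hc
    obtain ⟨⟨ℓ, hℓ, hσ⟩, rfl⟩ := hc
    simp only [coe_erase, coe_univ, Set.mem_sdiff, Set.mem_univ, Set.mem_singleton_iff, true_and]
    intro h
    have := congrFun h ⟨ℓ.1, mem_image_of_mem _ hℓ⟩
    simp [Clause.sign_eq_of_mem hℓ, ← hσ] at this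
  · intro c hc c' hc' h
    simp only [coe_filter, mem_univ, true_and, Set.mem_ofPred_eq] at hc hc'
    refine Clause.ext_of_clVars_of_sign (hc.2.trans hc'.2.symm) fun v hv => ?_
    exact congrFun h ⟨v, hc.2 ▸ hv⟩

theorem card_satisfied_clauses_le (σ : Fin n → Bool) :
    #{c : Clause n | Satisfies σ c} ≤ 7 * n.choose 3 := by
  rw [card_eq_sum_card_fiberwise (f := clVars) (t := powersetCard 3 univ)
    fun c _ => mem_powersetCard.mpr ⟨subset_univ _, c.2.2⟩]
  calc ∑ V ∈ powersetCard 3 univ, #{c ∈ {c : Clause n | Satisfies σ c} | clVars c = V}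
      ≤ ∑ V ∈ powersetCard 3 (univ : Finset (Fin n)), 7 := by
        refine sum_le_sum fun V hV => ?_
        rw [filter_filter]
        exact card_satisfied_clauses_on_vars_le σ (mem_powersetCard.mp hV).2
    _ = 7 * n.choose 3 := by simp [mul_comm]

end SatisfiedClauses

section Collisions

variable {ι β : Type*} [Fintype ι] [DecidableEq β] (C : ι → β)

theorem card_collisions_eq_sum_sq :
    #{p : ι × ι | C p.1 = C p.2} = ∑ b ∈ univ.image C, #{i | C i = b} ^ 2 := by
  rw [card_eq_sum_card_fiberwise (f := fun p => C p.1) (t := univ.image C)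
    fun p _ => mem_image_of_mem C (mem_univ p.1)]
  refine sum_congr rfl fun b _ => ?_
  rw [sq, ← card_product, filter_filter]
  congr 1
  ext ⟨i, j⟩
  simp only [mem_filter, mem_univ, true_and, mem_product]
  constructor
  · rintro ⟨hij, rfl⟩; exact ⟨rfl, hij.symm⟩
  · rintro ⟨rfl, hj⟩; exact ⟨hj.symm, rfl⟩

theorem sq_card_le_card_image_mul_card_collisions :
    Fintype.card ι ^ 2 ≤ #(univ.image C) * #{p : ι × ι | C p.1 = C p.2} := by
  rw [card_collisions_eq_sum_sq, ← card_univ, card_eq_sum_card_image C univ]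
  simpa only [filter_filter, true_and, Nat.cast_id] using
    sq_sum_le_card_mul_sum_sq (s := univ.image C) (f := fun b => #{i | C i = b})

theorem card_collisions_eq_card_add_two_mul [LinearOrder ι] :
    #{p : ι × ι | C p.1 = C p.2} =
      Fintype.card ι + 2 * #{p : ι × ι | p.1 < p.2 ∧ C p.1 = C p.2} := by
  have hswap : #{p : ι × ι | p.2 < p.1 ∧ C p.1 = C p.2} =
      #{p : ι × ι | p.1 < p.2 ∧ C p.1 = C p.2} :=
    card_nbij' Prod.swap Prod.swap (fun p hp => by simp_all) (fun p hp => by simp_all)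
      (fun p _ => rfl) (fun p _ => rfl)
  have hdiag : #{p : ι × ι | p.1 = p.2 ∧ C p.1 = C p.2} = Fintype.card ι := by
    rw [← card_univ, ← diag_card (univ : Finset ι)]
    exact congrArg card (ext fun p => by simp +contextual [mem_diag])
  calc #{p : ι × ι | C p.1 = C p.2}
      = #{p : ι × ι | p.1 = p.2 ∧ C p.1 = C p.2} + #{p : ι × ι | p.1 < p.2 ∧ C p.1 = C p.2} +
          #{p : ι × ι | p.2 < p.1 ∧ C p.1 = C p.2} := by
        simp only [card_filter, ← sum_add_distrib]
        refine sum_congr rfl fun p _ => ?_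
        rcases lt_trichotomy p.1 p.2 with h | h | h
        · simp [h, h.ne, h.not_gt]
        · simp [h]
        · simp [h, h.ne', h.not_gt]
    _ = _ := by rw [hdiag, hswap]; ring

end Collisions

theorem stmt5_general (n m : ℕ) (C : SatInstance n m) (h : SAT C) :
    ((m : ℝ) / 2) * ((m : ℝ) / (7 * (n.choose 3 : ℝ)) - 1) ≤ (xi C : ℝ) := by
  obtain ⟨σ, hσ⟩ := h
  have hdistinct : #(univ.image C) ≤ 7 * n.choose 3 := by
    refine (card_le_card fun c hc => ?_).trans (card_satisfied_clauses_le σ)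
    obtain ⟨i, -, rfl⟩ := mem_image.mp hc
    simpa using hσ i
  have hcollisions : m ^ 2 ≤ 7 * n.choose 3 * (m + 2 * xi C) := by
    have := sq_card_le_card_image_mul_card_collisions C
    rw [card_collisions_eq_card_add_two_mul, Fintype.card_fin] at this
    exact this.trans (Nat.mul_le_mul_right _ hdistinct)
  have hdiv : (m : ℝ) * m / (7 * n.choose 3) ≤ m + 2 * xi C :=
    div_le_of_le_mul₀ (by positivity) (by positivity) <| by
      rw [← sq, mul_comm]
      exact_mod_cast hcollisions
  calc ((m : ℝ) / 2) * ((m : ℝ) / (7 * (n.choose 3 : ℝ)) - 1)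
      = ((m : ℝ) * m / (7 * n.choose 3) - m) / 2 := by ring
    _ ≤ xi C := by linarith

/-- If a 3-SAT instance `C` with `m` clauses over `n ≥ 3` variables is satisfiable, then
`ξ(C) ≥ (m/2)·(m/(7·binom(n,3)) − 1)`. -/
theorem stmt5 (n m : ℕ) (hn : 3 ≤ n) (C : SatInstance n m) (h : SAT C) :
    ((m : ℝ) / 2) * ((m : ℝ) / (7 * (n.choose 3 : ℝ)) - 1) ≤ (xi C : ℝ) :=
  stmt5_general n m C h
end

section
/- Let c_1, c_2, c_3, c_4 be four clauses over n ≥ 3 variables, and let N be the number of K_{2,2}-edge-sets of the multigraph G((c_1,c_2,c_3,c_4)) that use exactly one edge from each of the four clauses. Then N ∈ {0, 1, 2}; moreover, N = 1 if and only if there exist six pairwise distinct literals a, b, d, f, g, h such that the multiset {c_1,c_2,c_3,c_4} equals {{a,b,g},{a,b,h},{d,f,g},{d,f,h}}, and N = 2 if and only if there exist five pairwise distinct literals a, b, d, g, h such that the multiset {c_1,c_2,c_3,c_4} equals {{a,b,g},{a,b,h},{a,d,g},{a,d,h}}. Furthermore, every K_{2,2}-edge-set of the multigraph G(C) of any instance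 C uses one edge from each of four pairwise distinct clause positions. -/
open scoped Classical

section helpers
variable {α : Type*}

lemma ms_pick {ι : Type*} [DecidableEq ι] {s : Multiset ι} (hs : s.Nodup) {x : ι → α}
    {A : α} {t : Multiset α} (h : Multiset.map x s = A ::ₘ t) :
    ∃ i ∈ s, x i = A ∧ Multiset.map x (s.erase i) = t ∧ (s.erase i).Nodup := by
  have hA : A ∈ Multiset.map x s := by rw [h]; exact Multiset.mem_cons_self _ _
  rcases Multiset.mem_map.mp hA with ⟨i, hi, hxi⟩
  refine ⟨i, hi, hxi, ?_, hs.erase i⟩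
  have hcons : i ::ₘ s.erase i = s := Multiset.cons_erase hi
  have : Multiset.map x (i ::ₘ s.erase i) = A ::ₘ t := by rw [hcons, h]
  rw [Multiset.map_cons, hxi] at this
  exact (Multiset.cons_inj_right A).mp this

lemma ms4 {x : Fin 4 → α} {A B C D : α}
    (h : ({x 0, x 1, x 2, x 3} : Multiset α) = {A, B, C, D}) :
    ∃ i j k l : Fin 4, i ≠ j ∧ i ≠ k ∧ i ≠ l ∧ j ≠ k ∧ j ≠ l ∧ k ≠ l ∧
      x i = A ∧ x j = B ∧ x k = C ∧ x l = D := by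
  have huniv : (Finset.univ.val : Multiset (Fin 4)) = {0, 1, 2, 3} := by decide
  have hmap : Multiset.map x (Finset.univ.val : Multiset (Fin 4)) = {A, B, C, D} := by
    rw [huniv]; simpa using h
  have hnd : (Finset.univ.val : Multiset (Fin 4)).Nodup := Finset.univ.nodup
  obtain ⟨i, hi, hxi, h1, hnd1⟩ := ms_pick hnd hmap
  obtain ⟨j, hj, hxj, h2, hnd2⟩ := ms_pick hnd1 h1
  obtain ⟨k, hk, hxk, h3, hnd3⟩ := ms_pick hnd2 h2
  obtain ⟨l, hl, hxl, h4, hnd4⟩ := ms_pick hnd3 h3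
  have hji : j ≠ i := (hnd.mem_erase_iff.mp hj).1
  have hkj : k ≠ j := (hnd1.mem_erase_iff.mp hk).1
  have hki : k ≠ i := (hnd.mem_erase_iff.mp (Multiset.mem_of_mem_erase hk)).1
  have hlk : l ≠ k := (hnd2.mem_erase_iff.mp hl).1
  have hlj : l ≠ j := (hnd1.mem_erase_iff.mp (Multiset.mem_of_mem_erase hl)).1
  have hli : l ≠ i :=
    (hnd.mem_erase_iff.mp (Multiset.mem_of_mem_erase (Multiset.mem_of_mem_erase hl))).1
  exact ⟨i, j, k, l, hji.symm, hki.symm, hli.symm, hkj.symm, hlj.symm, hlk.symm,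
    hxi, hxj, hxk, hxl⟩

lemma pos4 {x : Fin 4 → α} {i j k l : Fin 4}
    (hij : i ≠ j) (hik : i ≠ k) (hil : i ≠ l) (hjk : j ≠ k) (hjl : j ≠ l) (hkl : k ≠ l) :
    ({x i, x j, x k, x l} : Multiset α) = {x 0, x 1, x 2, x 3} := by
  have hnd : ({i, j, k, l} : Multiset (Fin 4)).Nodup := by
    simp [Multiset.nodup_cons, hij, hik, hil, hjk, hjl, hkl]
  have hset : (⟨{i, j, k, l}, hnd⟩ : Finset (Fin 4)) = Finset.univ := by
    apply Finset.eq_univ_of_card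
    rfl
  have hval : ({i, j, k, l} : Multiset (Fin 4)) = (Finset.univ.val : Multiset (Fin 4)) :=
    congrArg Finset.val hset
  have huniv : (Finset.univ.val : Multiset (Fin 4)) = {0, 1, 2, 3} := by decide
  calc ({x i, x j, x k, x l} : Multiset α) = Multiset.map x {i, j, k, l} := by
        simp
    _ = Multiset.map x {0, 1, 2, 3} := by rw [hval, huniv]
    _ = {x 0, x 1, x 2, x 3} := by simp

end helpers
section k22
variable {n m : ℕ}

lemma tri_insert (x y z : Lit n) : insert z ({x, y} : Finset (Lit n)) = {x, y, z} := by
  ext w; simp; tauto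

lemma k22_spec {C : SatInstance n m} {s : Finset (EdgeIdx n m)} (h : IsK22 C s) :
    ∃ (u u' : Finset (Lit n)) (v v' : Lit n) (i j k l : Fin m),
      u ≠ u' ∧ v ≠ v' ∧ v ∉ u ∧ v ∉ u' ∧ v' ∉ u ∧ v' ∉ u' ∧
      u.card = 2 ∧ u'.card = 2 ∧
      i ≠ j ∧ i ≠ k ∧ i ≠ l ∧ j ≠ k ∧ j ≠ l ∧ k ≠ l ∧
      (C i).1 = insert v u ∧ (C j).1 = insert v' u ∧
      (C k).1 = insert v u' ∧ (C l).1 = insert v' u' ∧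
      s = {(i, v), (j, v'), (k, v), (l, v')} := by
  obtain ⟨hcard, hedge, u, u', v, v', huu, hvv, himg⟩ := h
  -- the four pairs
  set P : Finset (Finset (Lit n) × Lit n) := {(u, v), (u, v'), (u', v), (u', v')} with hP
  have hPmem : ∀ p ∈ P, ∃ e ∈ s, (leftV C e, e.2) = p := by
    intro p hp
    rw [← himg] at hp
    exact Finset.mem_image.mp hp
  obtain ⟨e1, he1, hp1⟩ := hPmem (u, v) (by simp [hP])
  obtain ⟨e2, he2, hp2⟩ := hPmem (u, v') (by simp [hP])
  obtain ⟨e3, he3, hp3⟩ := hPmem (u', v) (by simp [hP])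
  obtain ⟨e4, he4, hp4⟩ := hPmem (u', v') (by simp [hP])
  have hv1 : e1.2 = v := congrArg Prod.snd hp1
  have hv2 : e2.2 = v' := congrArg Prod.snd hp2
  have hv3 : e3.2 = v := congrArg Prod.snd hp3
  have hv4 : e4.2 = v' := congrArg Prod.snd hp4
  have hl1 : leftV C e1 = u := congrArg Prod.fst hp1
  have hl2 : leftV C e2 = u := congrArg Prod.fst hp2
  have hl3 : leftV C e3 = u' := congrArg Prod.fst hp3
  have hl4 : leftV C e4 = u' := congrArg Prod.fst hp4
  -- clause equations
  have hc1 : (C e1.1).1 = insert v u := by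
    rw [← hl1, leftV, hv1, Finset.insert_erase (by rw [← hv1]; exact hedge e1 he1)]
  have hc2 : (C e2.1).1 = insert v' u := by
    rw [← hl2, leftV, hv2, Finset.insert_erase (by rw [← hv2]; exact hedge e2 he2)]
  have hc3 : (C e3.1).1 = insert v u' := by
    rw [← hl3, leftV, hv3, Finset.insert_erase (by rw [← hv3]; exact hedge e3 he3)]
  have hc4 : (C e4.1).1 = insert v' u' := by
    rw [← hl4, leftV, hv4, Finset.insert_erase (by rw [← hv4]; exact hedge e4 he4)]
  -- non-membership
  have hvu : v ∉ u := by rw [← hl1, leftV, ← hv1]; exact Finset.notMem_erase _ _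
  have hvu' : v ∉ u' := by rw [← hl3, leftV, ← hv3]; exact Finset.notMem_erase _ _
  have hv'u : v' ∉ u := by rw [← hl2, leftV, ← hv2]; exact Finset.notMem_erase _ _
  have hv'u' : v' ∉ u' := by rw [← hl4, leftV, ← hv4]; exact Finset.notMem_erase _ _
  -- cards
  have hu2 : u.card = 2 := by
    have := (C e1.1).2.1
    rw [hc1, Finset.card_insert_of_notMem hvu] at this
    omega
  have hu'2 : u'.card = 2 := by
    have := (C e3.1).2.1
    rw [hc3, Finset.card_insert_of_notMem hvu'] at this
    omega
  -- distinct positions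
  have h12 : e1.1 ≠ e2.1 := by
    intro hE
    rw [hE, hc2] at hc1
    have : v' ∈ insert v u := hc1 ▸ Finset.mem_insert_self v' u
    simp at this; tauto
  have h13 : e1.1 ≠ e3.1 := by
    intro hE
    rw [hE, hc3] at hc1
    apply huu
    rw [← Finset.erase_insert hvu, ← hc1, Finset.erase_insert hvu']
  have h14 : e1.1 ≠ e4.1 := by
    intro hE
    rw [hE, hc4] at hc1
    have : v' ∈ insert v u := hc1 ▸ Finset.mem_insert_self v' u'
    simp at this; tauto
  have h23 : e2.1 ≠ e3.1 := by
    intro hE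
    rw [hE, hc3] at hc2
    have : v ∈ insert v' u := hc2 ▸ Finset.mem_insert_self v u'
    simp at this; tauto
  have h24 : e2.1 ≠ e4.1 := by
    intro hE
    rw [hE, hc4] at hc2
    apply huu
    rw [← Finset.erase_insert hv'u, ← hc2, Finset.erase_insert hv'u']
  have h34 : e3.1 ≠ e4.1 := by
    intro hE
    rw [hE, hc4] at hc3
    have : v' ∈ insert v u' := hc3 ▸ Finset.mem_insert_self v' u'
    simp at this; tauto
  -- s equality
  have he1' : e1 = (e1.1, v) := by rw [← hv1]
  have he2' : e2 = (e2.1, v') := by rw [← hv2]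
  have he3' : e3 = (e3.1, v) := by rw [← hv3]
  have he4' : e4 = (e4.1, v') := by rw [← hv4]
  have hsub : ({(e1.1, v), (e2.1, v'), (e3.1, v), (e4.1, v')} : Finset (EdgeIdx n m)) ⊆ s := by
    intro e he
    simp only [Finset.mem_insert, Finset.mem_singleton] at he
    rcases he with rfl | rfl | rfl | rfl
    · rwa [← he1']
    · rwa [← he2']
    · rwa [← he3']
    · rwa [← he4']
  have hcard' : ({(e1.1, v), (e2.1, v'), (e3.1, v), (e4.1, v')} : Finset (EdgeIdx n m)).card = 4 := by
    rw [Finset.card_insert_of_notMem (by simp [Prod.ext_iff, h12, h13, h14, hvv]),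
      Finset.card_insert_of_notMem (by simp [Prod.ext_iff, h23, h24, hvv]),
      Finset.card_insert_of_notMem (by simp [Prod.ext_iff, h34, hvv]),
      Finset.card_singleton]
  have hseq : s = {(e1.1, v), (e2.1, v'), (e3.1, v), (e4.1, v')} :=
    (Finset.eq_of_subset_of_card_le hsub (by omega)).symm
  exact ⟨u, u', v, v', e1.1, e2.1, e3.1, e4.1, huu, hvv, hvu, hvu', hv'u, hv'u',
    hu2, hu'2, h12, h13, h14, h23, h24, h34, hc1, hc2, hc3, hc4, hseq⟩

end k22
section shape
variable {n : ℕ}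

lemma insert_eq_mem {q : Lit n} {p S : Finset (Lit n)} (h : insert q p = S) : q ∈ S :=
  h ▸ Finset.mem_insert_self q p

lemma insert_eq_mem' {q w : Lit n} {p S : Finset (Lit n)} (h : insert q p = S) (hw : w ∈ p) :
    w ∈ S := h ▸ Finset.mem_insert_of_mem hw

lemma mem_insert_cases {w q : Lit n} {p S : Finset (Lit n)} (h : insert q p = S) (hw : w ∈ S) :
    w = q ∨ w ∈ p := by rw [← h] at hw; simpa using hw

lemma pair_of_mem {x y : Lit n} {p : Finset (Lit n)} (hx : x ∈ p) (hy : y ∈ p) (hxy : x ≠ y)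
    (hp : p.card = 2) : p = {x, y} :=
  (Finset.eq_of_subset_of_card_le (by simp [Finset.insert_subset_iff, hx, hy])
    (by rw [hp, Finset.card_pair hxy])).symm

lemma mem3 {w x y z : Lit n} (hw : w ∈ ({x, y, z} : Finset (Lit n))) : w = x ∨ w = y ∨ w = z := by
  simpa using hw

end shape
section uniq
variable {n : ℕ}

lemma uniq2_aux {c : Fin 4 → Clause n} {a b d g h : Lit n}
    (hab : a ≠ b) (had : a ≠ d) (hag : a ≠ g) (hah : a ≠ h) (hbd : b ≠ d) (hbg : b ≠ g)
    (hbh : b ≠ h) (hdg : d ≠ g) (hdh : d ≠ h) (hgh : g ≠ h)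
    {i j k l : Fin 4}
    (hci : (c i).1 = {a, b, g}) (hcj : (c j).1 = {a, b, h})
    (hck : (c k).1 = {a, d, g}) (hcl : (c l).1 = {a, d, h})
    (hcover : ∀ t : Fin 4, t = i ∨ t = j ∨ t = k ∨ t = l)
    {p p' : Finset (Lit n)} {q q' : Lit n} {i' j' k' l' : Fin 4}
    (hpp : p ≠ p') (hqq : q ≠ q') (hqp : q ∉ p) (hqp' : q ∉ p') (hq'p : q' ∉ p)
    (hq'p' : q' ∉ p') (hp2 : p.card = 2) (hp'2 : p'.card = 2)
    (hc1 : (c i').1 = insert q p) (hc2 : (c j').1 = insert q' p)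
    (hc3 : (c k').1 = insert q p') (hc4 : (c l').1 = insert q' p')
    (hqpA : insert q p = ({a, b, g} : Finset (Lit n))) :
    ({(i', q), (j', q'), (k', q), (l', q')} : Finset (EdgeIdx n 4))
      = {(i, g), (j, h), (k, g), (l, h)} ∨
    ({(i', q), (j', q'), (k', q), (l', q')} : Finset (EdgeIdx n 4))
      = {(i, b), (j, b), (k, d), (l, d)} := by
  rcases mem3 (insert_eq_mem hqpA) with hq | hq | hq
  · -- q = a : impossible, a belongs to every clause but not to insert q' p
    replace hq := hq.symm; subst hq
    have hna : a ∉ insert q' p := by simp [hqq, hqp]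
    rcases hcover j' with hj' | hj' | hj' | hj'
    · exact absurd (by rw [← hc2, hj', hci]; simp) hna
    · exact absurd (by rw [← hc2, hj', hcj]; simp) hna
    · exact absurd (by rw [← hc2, hj', hck]; simp) hna
    · exact absurd (by rw [← hc2, hj', hcl]; simp) hna
  · -- q = b : yields the second K22
    replace hq := hq.symm; subst hq
    have hap : a ∈ p := by
      rcases mem_insert_cases hqpA (by simp : a ∈ ({a,b,g} : Finset (Lit n))) with h0 | h0
      · exact absurd h0 hab
      · exact h0
    have hgp : g ∈ p := by
      rcases mem_insert_cases hqpA (by simp : g ∈ ({a,b,g} : Finset (Lit n))) with h0 | h0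
      · exact absurd h0 (Ne.symm hbg)
      · exact h0
    have hpeq : p = {a, g} := pair_of_mem hap hgp hag hp2
    have hbni : b ∉ insert q' p := by simp [hqq, hqp]
    -- determine q' and j'
    rcases hcover j' with hj' | hj' | hj' | hj'
    · exact absurd (by rw [← hc2, hj', hci]; simp : b ∈ insert q' p) hbni
    · exact absurd (by rw [← hc2, hj', hcj]; simp : b ∈ insert q' p) hbni
    · -- j' = k, q' = d
      have hE : insert q' p = ({a,d,g} : Finset (Lit n)) := by rw [← hc2, hj', hck]
      have hq'd : q' = d := by
        rcases mem3 (insert_eq_mem hE) with h0 | h0 | h0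
        · exact absurd (h0 ▸ hq'p) (by simpa using hap)
        · exact h0
        · exact absurd (h0 ▸ hq'p) (by simpa using hgp)
      replace hq'd := hq'd.symm; subst hq'd
      -- determine p' and k'
      rcases hcover k' with hk' | hk' | hk' | hk'
      · have hE2 : insert b p' = ({a,b,g} : Finset (Lit n)) := by rw [← hc3, hk', hci]
        have hap' : a ∈ p' := by
          rcases mem_insert_cases hE2 (by simp : a ∈ ({a,b,g} : Finset (Lit n))) with h0 | h0
          · exact absurd h0 hab
          · exact h0
        have hgp' : g ∈ p' := by
          rcases mem_insert_cases hE2 (by simp : g ∈ ({a,b,g} : Finset (Lit n))) with h0 | h0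
          · exact absurd h0 (Ne.symm hbg)
          · exact h0
        exact absurd (hpeq.trans (pair_of_mem hap' hgp' hag hp'2).symm) hpp
      · -- k' = j, p' = {a, h}
        have hE2 : insert b p' = ({a,b,h} : Finset (Lit n)) := by rw [← hc3, hk', hcj]
        have hap' : a ∈ p' := by
          rcases mem_insert_cases hE2 (by simp : a ∈ ({a,b,h} : Finset (Lit n))) with h0 | h0
          · exact absurd h0 hab
          · exact h0
        have hhp' : h ∈ p' := by
          rcases mem_insert_cases hE2 (by simp : h ∈ ({a,b,h} : Finset (Lit n))) with h0 | h0
          · exact absurd h0 (Ne.symm hbh)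
          · exact h0
        -- determine l'
        rcases hcover l' with hl' | hl' | hl' | hl'
        · have hE3 : insert d p' = ({a,b,g} : Finset (Lit n)) := by rw [← hc4, hl', hci]
          rcases mem3 (insert_eq_mem hE3) with h0 | h0 | h0
          · exact absurd h0 (Ne.symm had)
          · exact absurd h0 (Ne.symm hbd)
          · exact absurd h0 hdg
        · have hE3 : insert d p' = ({a,b,h} : Finset (Lit n)) := by rw [← hc4, hl', hcj]
          rcases mem3 (insert_eq_mem hE3) with h0 | h0 | h0
          · exact absurd h0 (Ne.symm had)
          · exact absurd h0 (Ne.symm hbd)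
          · exact absurd h0 hdh
        · have hE3 : insert d p' = ({a,d,g} : Finset (Lit n)) := by rw [← hc4, hl', hck]
          rcases mem3 (insert_eq_mem' hE3 hhp') with h0 | h0 | h0
          · exact absurd h0 (Ne.symm hah)
          · exact absurd h0 (Ne.symm hdh)
          · exact absurd h0 (Ne.symm hgh)
        · -- l' = l; determine i'
          rcases hcover i' with hi' | hi' | hi' | hi'
          · -- success: second K22
            subst hi'; subst hj'; subst hk'; subst hl'
            right; ext e
            simp only [Finset.mem_insert, Finset.mem_singleton]
            tauto
          · have hE4 : insert b p = ({a,b,h} : Finset (Lit n)) := by rw [← hc1, hi', hcj]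
            rcases mem3 (insert_eq_mem' hE4 hgp) with h0 | h0 | h0
            · exact absurd h0 (Ne.symm hag)
            · exact absurd h0 (Ne.symm hbg)
            · exact absurd h0 hgh
          · have hE4 : insert b p = ({a,d,g} : Finset (Lit n)) := by rw [← hc1, hi', hck]
            rcases mem3 (insert_eq_mem hE4) with h0 | h0 | h0
            · exact absurd h0 (Ne.symm hab)
            · exact absurd h0 hbd
            · exact absurd h0 hbg
          · have hE4 : insert b p = ({a,d,h} : Finset (Lit n)) := by rw [← hc1, hi', hcl]
            rcases mem3 (insert_eq_mem hE4) with h0 | h0 | h0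
            · exact absurd h0 (Ne.symm hab)
            · exact absurd h0 hbd
            · exact absurd h0 hbh
      · have hE2 : insert b p' = ({a,d,g} : Finset (Lit n)) := by rw [← hc3, hk', hck]
        rcases mem3 (insert_eq_mem hE2) with h0 | h0 | h0
        · exact absurd h0 (Ne.symm hab)
        · exact absurd h0 hbd
        · exact absurd h0 hbg
      · have hE2 : insert b p' = ({a,d,h} : Finset (Lit n)) := by rw [← hc3, hk', hcl]
        rcases mem3 (insert_eq_mem hE2) with h0 | h0 | h0
        · exact absurd h0 (Ne.symm hab)
        · exact absurd h0 hbd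
        · exact absurd h0 hbh
    · -- j' = l : g ∈ {a,d,h}, impossible
      have hE : insert q' p = ({a,d,h} : Finset (Lit n)) := by rw [← hc2, hj', hcl]
      rcases mem3 (insert_eq_mem' hE hgp) with h0 | h0 | h0
      · exact absurd h0 (Ne.symm hag)
      · exact absurd h0 (Ne.symm hdg)
      · exact absurd h0 hgh
  · -- q = g : yields the first K22
    replace hq := hq.symm; subst hq
    have hap : a ∈ p := by
      rcases mem_insert_cases hqpA (by simp : a ∈ ({a,b,g} : Finset (Lit n))) with h0 | h0
      · exact absurd h0 hag
      · exact h0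
    have hbp : b ∈ p := by
      rcases mem_insert_cases hqpA (by simp : b ∈ ({a,b,g} : Finset (Lit n))) with h0 | h0
      · exact absurd h0 hbg
      · exact h0
    have hpeq : p = {a, b} := pair_of_mem hap hbp hab hp2
    -- determine q' and j'
    rcases hcover j' with hj' | hj' | hj' | hj'
    · have hE : insert q' p = ({a,b,g} : Finset (Lit n)) := by rw [← hc2, hj', hci]
      rcases mem3 (insert_eq_mem hE) with h0 | h0 | h0
      · exact absurd (h0 ▸ hq'p) (by simpa using hap)
      · exact absurd (h0 ▸ hq'p) (by simpa using hbp)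
      · exact absurd h0 (Ne.symm hqq)
    · -- j' = j, q' = h
      have hE : insert q' p = ({a,b,h} : Finset (Lit n)) := by rw [← hc2, hj', hcj]
      have hq'h : q' = h := by
        rcases mem3 (insert_eq_mem hE) with h0 | h0 | h0
        · exact absurd (h0 ▸ hq'p) (by simpa using hap)
        · exact absurd (h0 ▸ hq'p) (by simpa using hbp)
        · exact h0
      replace hq'h := hq'h.symm; subst hq'h
      -- determine p' and k'
      rcases hcover k' with hk' | hk' | hk' | hk'
      · have hE2 : insert g p' = ({a,b,g} : Finset (Lit n)) := by rw [← hc3, hk', hci]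
        have hap' : a ∈ p' := by
          rcases mem_insert_cases hE2 (by simp : a ∈ ({a,b,g} : Finset (Lit n))) with h0 | h0
          · exact absurd h0 hag
          · exact h0
        have hbp' : b ∈ p' := by
          rcases mem_insert_cases hE2 (by simp : b ∈ ({a,b,g} : Finset (Lit n))) with h0 | h0
          · exact absurd h0 hbg
          · exact h0
        exact absurd (hpeq.trans (pair_of_mem hap' hbp' hab hp'2).symm) hpp
      · have hE2 : insert g p' = ({a,b,h} : Finset (Lit n)) := by rw [← hc3, hk', hcj]
        rcases mem3 (insert_eq_mem hE2) with h0 | h0 | h0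
        · exact absurd h0 (Ne.symm hag)
        · exact absurd h0 (Ne.symm hbg)
        · exact absurd h0 hgh
      · -- k' = k, p' = {a, d}
        have hE2 : insert g p' = ({a,d,g} : Finset (Lit n)) := by rw [← hc3, hk', hck]
        have hap' : a ∈ p' := by
          rcases mem_insert_cases hE2 (by simp : a ∈ ({a,d,g} : Finset (Lit n))) with h0 | h0
          · exact absurd h0 hag
          · exact h0
        have hdp' : d ∈ p' := by
          rcases mem_insert_cases hE2 (by simp : d ∈ ({a,d,g} : Finset (Lit n))) with h0 | h0
          · exact absurd h0 hdg
          · exact h0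
        -- determine l'
        rcases hcover l' with hl' | hl' | hl' | hl'
        · have hE3 : insert h p' = ({a,b,g} : Finset (Lit n)) := by rw [← hc4, hl', hci]
          rcases mem3 (insert_eq_mem hE3) with h0 | h0 | h0
          · exact absurd h0 (Ne.symm hah)
          · exact absurd h0 (Ne.symm hbh)
          · exact absurd h0 (Ne.symm hgh)
        · have hE3 : insert h p' = ({a,b,h} : Finset (Lit n)) := by rw [← hc4, hl', hcj]
          rcases mem3 (insert_eq_mem' hE3 hdp') with h0 | h0 | h0
          · exact absurd h0 (Ne.symm had)
          · exact absurd h0 (Ne.symm hbd)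
          · exact absurd h0 hdh
        · have hE3 : insert h p' = ({a,d,g} : Finset (Lit n)) := by rw [← hc4, hl', hck]
          rcases mem3 (insert_eq_mem hE3) with h0 | h0 | h0
          · exact absurd h0 (Ne.symm hah)
          · exact absurd h0 (Ne.symm hdh)
          · exact absurd h0 (Ne.symm hgh)
        · -- l' = l; determine i'
          rcases hcover i' with hi' | hi' | hi' | hi'
          · -- success: first K22
            subst hi'; subst hj'; subst hk'; subst hl'
            left
            ext e
            simp only [Finset.mem_insert, Finset.mem_singleton]
          · have hE4 : insert g p = ({a,b,h} : Finset (Lit n)) := by rw [← hc1, hi', hcj]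
            rcases mem3 (insert_eq_mem hE4) with h0 | h0 | h0
            · exact absurd h0 (Ne.symm hag)
            · exact absurd h0 (Ne.symm hbg)
            · exact absurd h0 hgh
          · have hE4 : insert g p = ({a,d,g} : Finset (Lit n)) := by rw [← hc1, hi', hck]
            rcases mem3 (insert_eq_mem' hE4 hbp) with h0 | h0 | h0
            · exact absurd h0 (Ne.symm hab)
            · exact absurd h0 hbd
            · exact absurd h0 hbg
          · have hE4 : insert g p = ({a,d,h} : Finset (Lit n)) := by rw [← hc1, hi', hcl]
            rcases mem3 (insert_eq_mem' hE4 hbp) with h0 | h0 | h0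
            · exact absurd h0 (Ne.symm hab)
            · exact absurd h0 hbd
            · exact absurd h0 hbh
      · have hE2 : insert g p' = ({a,d,h} : Finset (Lit n)) := by rw [← hc3, hk', hcl]
        rcases mem3 (insert_eq_mem hE2) with h0 | h0 | h0
        · exact absurd h0 (Ne.symm hag)
        · exact absurd h0 (Ne.symm hdg)
        · exact absurd h0 hgh
    · -- j' = k : q' ∈ {a,d,g} forces q' = d but also b ∈ {a,d,g}, impossible
      have hE : insert q' p = ({a,d,g} : Finset (Lit n)) := by rw [← hc2, hj', hck]
      rcases mem3 (insert_eq_mem' hE hbp) with h0 | h0 | h0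
      · exact absurd h0 (Ne.symm hab)
      · exact absurd h0 hbd
      · exact absurd h0 hbg
    · -- j' = l : b ∈ {a,d,h}, impossible
      have hE : insert q' p = ({a,d,h} : Finset (Lit n)) := by rw [← hc2, hj', hcl]
      rcases mem3 (insert_eq_mem' hE hbp) with h0 | h0 | h0
      · exact absurd h0 (Ne.symm hab)
      · exact absurd h0 hbd
      · exact absurd h0 hbh

end uniq
section uniq1
variable {n : ℕ}

lemma uniq1_aux {c : Fin 4 → Clause n} {a b d f g h : Lit n}
    (hab : a ≠ b) (had : a ≠ d) (haf : a ≠ f) (hag : a ≠ g) (hah : a ≠ h)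
    (hbd : b ≠ d) (hbf : b ≠ f) (hbg : b ≠ g) (hbh : b ≠ h)
    (hdf : d ≠ f) (hdg : d ≠ g) (hdh : d ≠ h) (hfg : f ≠ g) (hfh : f ≠ h) (hgh : g ≠ h)
    {i j k l : Fin 4}
    (hci : (c i).1 = {a, b, g}) (hcj : (c j).1 = {a, b, h})
    (hck : (c k).1 = {d, f, g}) (hcl : (c l).1 = {d, f, h})
    (hcover : ∀ t : Fin 4, t = i ∨ t = j ∨ t = k ∨ t = l)
    {p p' : Finset (Lit n)} {q q' : Lit n} {i' j' k' l' : Fin 4}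
    (hpp : p ≠ p') (hqq : q ≠ q') (hqp : q ∉ p) (hqp' : q ∉ p') (hq'p : q' ∉ p)
    (hq'p' : q' ∉ p') (hp2 : p.card = 2) (hp'2 : p'.card = 2)
    (hc1 : (c i').1 = insert q p) (hc2 : (c j').1 = insert q' p)
    (hc3 : (c k').1 = insert q p') (hc4 : (c l').1 = insert q' p')
    (hqpA : insert q p = ({a, b, g} : Finset (Lit n))) :
    ({(i', q), (j', q'), (k', q), (l', q')} : Finset (EdgeIdx n 4))
      = {(i, g), (j, h), (k, g), (l, h)} := by
  rcases mem3 (insert_eq_mem hqpA) with hq | hq | hq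
  · -- q = a : impossible
    replace hq := hq.symm; subst hq
    have hbp : b ∈ p := by
      rcases mem_insert_cases hqpA (by simp : b ∈ ({a,b,g} : Finset (Lit n))) with h0 | h0
      · exact absurd h0 (Ne.symm hab)
      · exact h0
    have hna : a ∉ insert q' p := by simp [hqq, hqp]
    rcases hcover j' with hj' | hj' | hj' | hj'
    · exact absurd (by rw [← hc2, hj', hci]; simp) hna
    · exact absurd (by rw [← hc2, hj', hcj]; simp) hna
    · have hE : insert q' p = ({d,f,g} : Finset (Lit n)) := by rw [← hc2, hj', hck]
      rcases mem3 (insert_eq_mem' hE hbp) with h0 | h0 | h0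
      · exact absurd h0 hbd
      · exact absurd h0 hbf
      · exact absurd h0 hbg
    · have hE : insert q' p = ({d,f,h} : Finset (Lit n)) := by rw [← hc2, hj', hcl]
      rcases mem3 (insert_eq_mem' hE hbp) with h0 | h0 | h0
      · exact absurd h0 hbd
      · exact absurd h0 hbf
      · exact absurd h0 hbh
  · -- q = b : impossible
    replace hq := hq.symm; subst hq
    have hap : a ∈ p := by
      rcases mem_insert_cases hqpA (by simp : a ∈ ({a,b,g} : Finset (Lit n))) with h0 | h0
      · exact absurd h0 hab
      · exact h0
    have hna : b ∉ insert q' p := by simp [hqq, hqp]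
    rcases hcover j' with hj' | hj' | hj' | hj'
    · exact absurd (by rw [← hc2, hj', hci]; simp) hna
    · exact absurd (by rw [← hc2, hj', hcj]; simp) hna
    · have hE : insert q' p = ({d,f,g} : Finset (Lit n)) := by rw [← hc2, hj', hck]
      rcases mem3 (insert_eq_mem' hE hap) with h0 | h0 | h0
      · exact absurd h0 had
      · exact absurd h0 haf
      · exact absurd h0 hag
    · have hE : insert q' p = ({d,f,h} : Finset (Lit n)) := by rw [← hc2, hj', hcl]
      rcases mem3 (insert_eq_mem' hE hap) with h0 | h0 | h0
      · exact absurd h0 had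
      · exact absurd h0 haf
      · exact absurd h0 hah
  · -- q = g
    replace hq := hq.symm; subst hq
    have hap : a ∈ p := by
      rcases mem_insert_cases hqpA (by simp : a ∈ ({a,b,g} : Finset (Lit n))) with h0 | h0
      · exact absurd h0 hag
      · exact h0
    have hbp : b ∈ p := by
      rcases mem_insert_cases hqpA (by simp : b ∈ ({a,b,g} : Finset (Lit n))) with h0 | h0
      · exact absurd h0 hbg
      · exact h0
    have hpeq : p = {a, b} := pair_of_mem hap hbp hab hp2
    rcases hcover j' with hj' | hj' | hj' | hj'
    · have hE : insert q' p = ({a,b,g} : Finset (Lit n)) := by rw [← hc2, hj', hci]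
      rcases mem3 (insert_eq_mem hE) with h0 | h0 | h0
      · exact absurd (h0 ▸ hq'p) (by simpa using hap)
      · exact absurd (h0 ▸ hq'p) (by simpa using hbp)
      · exact absurd h0 (Ne.symm hqq)
    · -- j' = j, q' = h
      have hE : insert q' p = ({a,b,h} : Finset (Lit n)) := by rw [← hc2, hj', hcj]
      have hq'h : q' = h := by
        rcases mem3 (insert_eq_mem hE) with h0 | h0 | h0
        · exact absurd (h0 ▸ hq'p) (by simpa using hap)
        · exact absurd (h0 ▸ hq'p) (by simpa using hbp)
        · exact h0
      replace hq'h := hq'h.symm; subst hq'h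
      rcases hcover k' with hk' | hk' | hk' | hk'
      · have hE2 : insert g p' = ({a,b,g} : Finset (Lit n)) := by rw [← hc3, hk', hci]
        have hap' : a ∈ p' := by
          rcases mem_insert_cases hE2 (by simp : a ∈ ({a,b,g} : Finset (Lit n))) with h0 | h0
          · exact absurd h0 hag
          · exact h0
        have hbp' : b ∈ p' := by
          rcases mem_insert_cases hE2 (by simp : b ∈ ({a,b,g} : Finset (Lit n))) with h0 | h0
          · exact absurd h0 hbg
          · exact h0
        exact absurd (hpeq.trans (pair_of_mem hap' hbp' hab hp'2).symm) hpp
      · have hE2 : insert g p' = ({a,b,h} : Finset (Lit n)) := by rw [← hc3, hk', hcj]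
        rcases mem3 (insert_eq_mem hE2) with h0 | h0 | h0
        · exact absurd h0 (Ne.symm hag)
        · exact absurd h0 (Ne.symm hbg)
        · exact absurd h0 hgh
      · -- k' = k, p' = {d, f}
        have hE2 : insert g p' = ({d,f,g} : Finset (Lit n)) := by rw [← hc3, hk', hck]
        have hdp' : d ∈ p' := by
          rcases mem_insert_cases hE2 (by simp : d ∈ ({d,f,g} : Finset (Lit n))) with h0 | h0
          · exact absurd h0 hdg
          · exact h0
        have hfp' : f ∈ p' := by
          rcases mem_insert_cases hE2 (by simp : f ∈ ({d,f,g} : Finset (Lit n))) with h0 | h0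
          · exact absurd h0 hfg
          · exact h0
        rcases hcover l' with hl' | hl' | hl' | hl'
        · have hE3 : insert h p' = ({a,b,g} : Finset (Lit n)) := by rw [← hc4, hl', hci]
          rcases mem3 (insert_eq_mem hE3) with h0 | h0 | h0
          · exact absurd h0 (Ne.symm hah)
          · exact absurd h0 (Ne.symm hbh)
          · exact absurd h0 (Ne.symm hgh)
        · have hE3 : insert h p' = ({a,b,h} : Finset (Lit n)) := by rw [← hc4, hl', hcj]
          rcases mem3 (insert_eq_mem' hE3 hdp') with h0 | h0 | h0
          · exact absurd h0 (Ne.symm had)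
          · exact absurd h0 (Ne.symm hbd)
          · exact absurd h0 hdh
        · have hE3 : insert h p' = ({d,f,g} : Finset (Lit n)) := by rw [← hc4, hl', hck]
          rcases mem3 (insert_eq_mem hE3) with h0 | h0 | h0
          · exact absurd h0 (Ne.symm hdh)
          · exact absurd h0 (Ne.symm hfh)
          · exact absurd h0 (Ne.symm hgh)
        · -- l' = l; pin i'
          rcases hcover i' with hi' | hi' | hi' | hi'
          · subst hi'; subst hj'; subst hk'; subst hl'
            ext e
            simp only [Finset.mem_insert, Finset.mem_singleton]
          · have hE4 : insert g p = ({a,b,h} : Finset (Lit n)) := by rw [← hc1, hi', hcj]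
            rcases mem3 (insert_eq_mem hE4) with h0 | h0 | h0
            · exact absurd h0 (Ne.symm hag)
            · exact absurd h0 (Ne.symm hbg)
            · exact absurd h0 hgh
          · have hE4 : insert g p = ({d,f,g} : Finset (Lit n)) := by rw [← hc1, hi', hck]
            rcases mem3 (insert_eq_mem' hE4 hap) with h0 | h0 | h0
            · exact absurd h0 had
            · exact absurd h0 haf
            · exact absurd h0 hag
          · have hE4 : insert g p = ({d,f,h} : Finset (Lit n)) := by rw [← hc1, hi', hcl]
            rcases mem3 (insert_eq_mem' hE4 hap) with h0 | h0 | h0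
            · exact absurd h0 had
            · exact absurd h0 haf
            · exact absurd h0 hah
      · have hE2 : insert g p' = ({d,f,h} : Finset (Lit n)) := by rw [← hc3, hk', hcl]
        rcases mem3 (insert_eq_mem hE2) with h0 | h0 | h0
        · exact absurd h0 (Ne.symm hdg)
        · exact absurd h0 (Ne.symm hfg)
        · exact absurd h0 hgh
    · have hE : insert q' p = ({d,f,g} : Finset (Lit n)) := by rw [← hc2, hj', hck]
      rcases mem3 (insert_eq_mem' hE hap) with h0 | h0 | h0
      · exact absurd h0 had
      · exact absurd h0 haf
      · exact absurd h0 hag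
    · have hE : insert q' p = ({d,f,h} : Finset (Lit n)) := by rw [← hc2, hj', hcl]
      rcases mem3 (insert_eq_mem' hE hap) with h0 | h0 | h0
      · exact absurd h0 had
      · exact absurd h0 haf
      · exact absurd h0 hah

end uniq1
section build
variable {n : ℕ}

lemma tri2 (x y z : Lit n) : insert z ({y, x} : Finset (Lit n)) = {x, y, z} := by
  ext w; simp; tauto

lemma k22_build {m : ℕ} {C : SatInstance n m} {u u' : Finset (Lit n)} {v v' : Lit n}
    {i j k l : Fin m} (huu : u ≠ u') (hvv : v ≠ v')
    (hvu : v ∉ u) (hvu' : v ∉ u') (hv'u : v' ∉ u) (hv'u' : v' ∉ u')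
    (hij : i ≠ j) (hik : i ≠ k) (hil : i ≠ l) (hjk : j ≠ k) (hjl : j ≠ l) (hkl : k ≠ l)
    (hc1 : (C i).1 = insert v u) (hc2 : (C j).1 = insert v' u)
    (hc3 : (C k).1 = insert v u') (hc4 : (C l).1 = insert v' u') :
    IsK22 C ({(i, v), (j, v'), (k, v), (l, v')} : Finset (EdgeIdx n m)) := by
  have l1 : leftV C (i, v) = u := by
    show (C i).1.erase v = u
    rw [hc1, Finset.erase_insert hvu]
  have l2 : leftV C (j, v') = u := by
    show (C j).1.erase v' = u
    rw [hc2, Finset.erase_insert hv'u]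
  have l3 : leftV C (k, v) = u' := by
    show (C k).1.erase v = u'
    rw [hc3, Finset.erase_insert hvu']
  have l4 : leftV C (l, v') = u' := by
    show (C l).1.erase v' = u'
    rw [hc4, Finset.erase_insert hv'u']
  refine ⟨?_, ?_, u, u', v, v', huu, hvv, ?_⟩
  · rw [Finset.card_insert_of_notMem (by simp [Prod.ext_iff, hij, hik, hil]),
      Finset.card_insert_of_notMem (by simp [Prod.ext_iff, hjk, hjl]),
      Finset.card_insert_of_notMem (by simp [Prod.ext_iff, hkl]),
      Finset.card_singleton]
  · intro e he
    simp only [Finset.mem_insert, Finset.mem_singleton] at he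
    rcases he with rfl | rfl | rfl | rfl
    · show v ∈ (C i).1; rw [hc1]; exact Finset.mem_insert_self _ _
    · show v' ∈ (C j).1; rw [hc2]; exact Finset.mem_insert_self _ _
    · show v ∈ (C k).1; rw [hc3]; exact Finset.mem_insert_self _ _
    · show v' ∈ (C l).1; rw [hc4]; exact Finset.mem_insert_self _ _
  · rw [Finset.image_insert, Finset.image_insert, Finset.image_insert, Finset.image_singleton]
    dsimp only
    rw [l1, l2, l3, l4]

lemma quad_image_fst {m : ℕ} {i j k l : Fin m} {v v' : Lit n} :
    ({(i, v), (j, v'), (k, v), (l, v')} : Finset (EdgeIdx n m)).image Prod.fst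
      = {i, j, k, l} := by
  rw [Finset.image_insert, Finset.image_insert, Finset.image_insert, Finset.image_singleton]

lemma quad_univ {i j k l : Fin 4}
    (hij : i ≠ j) (hik : i ≠ k) (hil : i ≠ l) (hjk : j ≠ k) (hjl : j ≠ l) (hkl : k ≠ l) :
    ({i, j, k, l} : Finset (Fin 4)) = Finset.univ := by
  apply Finset.eq_univ_of_card
  rw [Finset.card_insert_of_notMem (by simp [hij, hik, hil]),
    Finset.card_insert_of_notMem (by simp [hjk, hjl]),
    Finset.card_insert_of_notMem (by simp [hkl]), Finset.card_singleton]
  rfl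

end build
section counts
variable {n : ℕ}

set_option maxHeartbeats 2000000 in
lemma count_shape1 {c : Fin 4 → Clause n} {a b d f g h : Lit n}
    (hab : a ≠ b) (had : a ≠ d) (haf : a ≠ f) (hag : a ≠ g) (hah : a ≠ h)
    (hbd : b ≠ d) (hbf : b ≠ f) (hbg : b ≠ g) (hbh : b ≠ h)
    (hdf : d ≠ f) (hdg : d ≠ g) (hdh : d ≠ h) (hfg : f ≠ g) (hfh : f ≠ h) (hgh : g ≠ h)
    {i j k l : Fin 4}
    (hij : i ≠ j) (hik : i ≠ k) (hil : i ≠ l) (hjk : j ≠ k) (hjl : j ≠ l) (hkl : k ≠ l)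
    (hci : (c i).1 = {a, b, g}) (hcj : (c j).1 = {a, b, h})
    (hck : (c k).1 = {d, f, g}) (hcl : (c l).1 = {d, f, h}) :
    (Finset.univ.filter fun s : Finset (EdgeIdx n 4) =>
      IsK22 c s ∧ s.image Prod.fst = (Finset.univ : Finset (Fin 4))).card = 1 := by
  have huniv4 := quad_univ hij hik hil hjk hjl hkl
  have hcover : ∀ t : Fin 4, t = i ∨ t = j ∨ t = k ∨ t = l := by
    intro t
    have : t ∈ ({i, j, k, l} : Finset (Fin 4)) := huniv4 ▸ Finset.mem_univ t
    simpa using this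
  have hfilter : (Finset.univ.filter fun s : Finset (EdgeIdx n 4) =>
      IsK22 c s ∧ s.image Prod.fst = (Finset.univ : Finset (Fin 4)))
      = {({(i, g), (j, h), (k, g), (l, h)} : Finset (EdgeIdx n 4))} := by
    ext s
    simp only [Finset.mem_filter, Finset.mem_univ, true_and, Finset.mem_singleton]
    constructor
    · rintro ⟨hk, _himg⟩
      obtain ⟨p, p', q, q', i', j', k', l', hpp, hqq, hqp, hqp', hq'p, hq'p', hp2, hp'2,
        h12, h13, h14, h23, h24, h34, hc1, hc2, hc3, hc4, hseq⟩ := k22_spec hk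
      subst hseq
      rcases hcover i' with hi0 | hi0 | hi0 | hi0
      · have hA : insert q p = ({a, b, g} : Finset (Lit n)) := by rw [← hc1, hi0, hci]
        exact uniq1_aux hab had haf hag hah hbd hbf hbg hbh hdf hdg hdh hfg hfh hgh
          hci hcj hck hcl hcover hpp hqq hqp hqp' hq'p hq'p' hp2 hp'2 hc1 hc2 hc3 hc4 hA
      · have hA : insert q p = ({a, b, h} : Finset (Lit n)) := by rw [← hc1, hi0, hcj]
        have hcover' : ∀ t : Fin 4, t = j ∨ t = i ∨ t = l ∨ t = k := by
          intro t; rcases hcover t with h0 | h0 | h0 | h0 <;> tauto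
        have hres := uniq1_aux hab had haf hah hag hbd hbf hbh hbg hdf hdh hdg hfh hfg
          (Ne.symm hgh) hcj hci hcl hck hcover' hpp hqq hqp hqp' hq'p hq'p' hp2 hp'2
          hc1 hc2 hc3 hc4 hA
        rw [hres]; ext e; simp only [Finset.mem_insert, Finset.mem_singleton]; tauto
      · have hA : insert q p = ({d, f, g} : Finset (Lit n)) := by rw [← hc1, hi0, hck]
        have hcover' : ∀ t : Fin 4, t = k ∨ t = l ∨ t = i ∨ t = j := by
          intro t; rcases hcover t with h0 | h0 | h0 | h0 <;> tauto
        have hres := uniq1_aux hdf (Ne.symm had) (Ne.symm hbd) hdg hdh (Ne.symm haf)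
          (Ne.symm hbf) hfg hfh hab hag hah hbg hbh hgh
          hck hcl hci hcj hcover' hpp hqq hqp hqp' hq'p hq'p' hp2 hp'2 hc1 hc2 hc3 hc4 hA
        rw [hres]; ext e; simp only [Finset.mem_insert, Finset.mem_singleton]; tauto
      · have hA : insert q p = ({d, f, h} : Finset (Lit n)) := by rw [← hc1, hi0, hcl]
        have hcover' : ∀ t : Fin 4, t = l ∨ t = k ∨ t = j ∨ t = i := by
          intro t; rcases hcover t with h0 | h0 | h0 | h0 <;> tauto
        have hres := uniq1_aux hdf (Ne.symm had) (Ne.symm hbd) hdh hdg (Ne.symm haf)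
          (Ne.symm hbf) hfh hfg hab hah hag hbh hbg (Ne.symm hgh)
          hcl hck hcj hci hcover' hpp hqq hqp hqp' hq'p hq'p' hp2 hp'2 hc1 hc2 hc3 hc4 hA
        rw [hres]; ext e; simp only [Finset.mem_insert, Finset.mem_singleton]; tauto
    · rintro rfl
      refine ⟨k22_build (u := {a, b}) (u' := {d, f}) (v := g) (v' := h)
        ?_ hgh ?_ ?_ ?_ ?_ hij hik hil hjk hjl hkl ?_ ?_ ?_ ?_, ?_⟩
      · intro hE
        have : a ∈ ({d, f} : Finset (Lit n)) := hE ▸ (by simp)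
        simp [had, haf] at this
      · simp [Ne.symm hag, Ne.symm hbg]
      · simp [Ne.symm hdg, Ne.symm hfg]
      · simp [Ne.symm hah, Ne.symm hbh]
      · simp [Ne.symm hdh, Ne.symm hfh]
      · rw [hci]; exact (tri_insert a b g).symm
      · rw [hcj]; exact (tri_insert a b h).symm
      · rw [hck]; exact (tri_insert d f g).symm
      · rw [hcl]; exact (tri_insert d f h).symm
      · rw [quad_image_fst]; exact huniv4
  rw [hfilter, Finset.card_singleton]

set_option maxHeartbeats 2000000 in
lemma count_shape2 {c : Fin 4 → Clause n} {a b d g h : Lit n}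
    (hab : a ≠ b) (had : a ≠ d) (hag : a ≠ g) (hah : a ≠ h) (hbd : b ≠ d) (hbg : b ≠ g)
    (hbh : b ≠ h) (hdg : d ≠ g) (hdh : d ≠ h) (hgh : g ≠ h)
    {i j k l : Fin 4}
    (hij : i ≠ j) (hik : i ≠ k) (hil : i ≠ l) (hjk : j ≠ k) (hjl : j ≠ l) (hkl : k ≠ l)
    (hci : (c i).1 = {a, b, g}) (hcj : (c j).1 = {a, b, h})
    (hck : (c k).1 = {a, d, g}) (hcl : (c l).1 = {a, d, h}) :
    (Finset.univ.filter fun s : Finset (EdgeIdx n 4) =>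
      IsK22 c s ∧ s.image Prod.fst = (Finset.univ : Finset (Fin 4))).card = 2 := by
  have huniv4 := quad_univ hij hik hil hjk hjl hkl
  have hcover : ∀ t : Fin 4, t = i ∨ t = j ∨ t = k ∨ t = l := by
    intro t
    have : t ∈ ({i, j, k, l} : Finset (Fin 4)) := huniv4 ▸ Finset.mem_univ t
    simpa using this
  have hfilter : (Finset.univ.filter fun s : Finset (EdgeIdx n 4) =>
      IsK22 c s ∧ s.image Prod.fst = (Finset.univ : Finset (Fin 4)))
      = {({(i, g), (j, h), (k, g), (l, h)} : Finset (EdgeIdx n 4)),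
         ({(i, b), (j, b), (k, d), (l, d)} : Finset (EdgeIdx n 4))} := by
    ext s
    simp only [Finset.mem_filter, Finset.mem_univ, true_and, Finset.mem_insert,
      Finset.mem_singleton]
    constructor
    · rintro ⟨hk, _himg⟩
      obtain ⟨p, p', q, q', i', j', k', l', hpp, hqq, hqp, hqp', hq'p, hq'p', hp2, hp'2,
        h12, h13, h14, h23, h24, h34, hc1, hc2, hc3, hc4, hseq⟩ := k22_spec hk
      subst hseq
      rcases hcover i' with hi0 | hi0 | hi0 | hi0
      · have hA : insert q p = ({a, b, g} : Finset (Lit n)) := by rw [← hc1, hi0, hci]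
        exact uniq2_aux hab had hag hah hbd hbg hbh hdg hdh hgh
          hci hcj hck hcl hcover hpp hqq hqp hqp' hq'p hq'p' hp2 hp'2 hc1 hc2 hc3 hc4 hA
      · have hA : insert q p = ({a, b, h} : Finset (Lit n)) := by rw [← hc1, hi0, hcj]
        have hcover' : ∀ t : Fin 4, t = j ∨ t = i ∨ t = l ∨ t = k := by
          intro t; rcases hcover t with h0 | h0 | h0 | h0 <;> tauto
        have hres := uniq2_aux hab had hah hag hbd hbh hbg hdh hdg (Ne.symm hgh)
          hcj hci hcl hck hcover' hpp hqq hqp hqp' hq'p hq'p' hp2 hp'2 hc1 hc2 hc3 hc4 hA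
        rcases hres with h0 | h0
        · left; rw [h0]; ext e; simp only [Finset.mem_insert, Finset.mem_singleton]; tauto
        · right; rw [h0]; ext e; simp only [Finset.mem_insert, Finset.mem_singleton]; tauto
      · have hA : insert q p = ({a, d, g} : Finset (Lit n)) := by rw [← hc1, hi0, hck]
        have hcover' : ∀ t : Fin 4, t = k ∨ t = l ∨ t = i ∨ t = j := by
          intro t; rcases hcover t with h0 | h0 | h0 | h0 <;> tauto
        have hres := uniq2_aux had hab hag hah (Ne.symm hbd) hdg hdh hbg hbh hgh
          hck hcl hci hcj hcover' hpp hqq hqp hqp' hq'p hq'p' hp2 hp'2 hc1 hc2 hc3 hc4 hA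
        rcases hres with h0 | h0
        · left; rw [h0]; ext e; simp only [Finset.mem_insert, Finset.mem_singleton]; tauto
        · right; rw [h0]; ext e; simp only [Finset.mem_insert, Finset.mem_singleton]; tauto
      · have hA : insert q p = ({a, d, h} : Finset (Lit n)) := by rw [← hc1, hi0, hcl]
        have hcover' : ∀ t : Fin 4, t = l ∨ t = k ∨ t = j ∨ t = i := by
          intro t; rcases hcover t with h0 | h0 | h0 | h0 <;> tauto
        have hres := uniq2_aux had hab hah hag (Ne.symm hbd) hdh hdg hbh hbg (Ne.symm hgh)
          hcl hck hcj hci hcover' hpp hqq hqp hqp' hq'p hq'p' hp2 hp'2 hc1 hc2 hc3 hc4 hA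
        rcases hres with h0 | h0
        · left; rw [h0]; ext e; simp only [Finset.mem_insert, Finset.mem_singleton]; tauto
        · right; rw [h0]; ext e; simp only [Finset.mem_insert, Finset.mem_singleton]; tauto
    · rintro (rfl | rfl)
      · refine ⟨k22_build (u := {a, b}) (u' := {a, d}) (v := g) (v' := h)
          ?_ hgh ?_ ?_ ?_ ?_ hij hik hil hjk hjl hkl ?_ ?_ ?_ ?_, ?_⟩
        · intro hE
          have : b ∈ ({a, d} : Finset (Lit n)) := hE ▸ (by simp)
          simp [Ne.symm hab, hbd] at this
        · simp [Ne.symm hag, Ne.symm hbg]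
        · simp [Ne.symm hag, Ne.symm hdg]
        · simp [Ne.symm hah, Ne.symm hbh]
        · simp [Ne.symm hah, Ne.symm hdh]
        · rw [hci]; exact (tri_insert a b g).symm
        · rw [hcj]; exact (tri_insert a b h).symm
        · rw [hck]; exact (tri_insert a d g).symm
        · rw [hcl]; exact (tri_insert a d h).symm
        · rw [quad_image_fst]; exact huniv4
      · have hset : ({(i, b), (k, d), (j, b), (l, d)} : Finset (EdgeIdx n 4))
            = {(i, b), (j, b), (k, d), (l, d)} := by
          ext e; simp only [Finset.mem_insert, Finset.mem_singleton]; tauto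
        have hb : IsK22 c ({(i, b), (k, d), (j, b), (l, d)} : Finset (EdgeIdx n 4)) := by
          refine k22_build (u := {a, g}) (u' := {a, h}) (v := b) (v' := d)
            ?_ hbd ?_ ?_ ?_ ?_ hik hij hil (Ne.symm hjk) hkl hjl ?_ ?_ ?_ ?_
          · intro hE
            have : g ∈ ({a, h} : Finset (Lit n)) := hE ▸ (by simp)
            simp [Ne.symm hag, hgh] at this
          · simp [Ne.symm hab, hbg]
          · simp [Ne.symm hab, hbh]
          · simp [Ne.symm had, hdg]
          · simp [Ne.symm had, hdh]
          · rw [hci]; ext w; simp; tauto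
          · rw [hck]; ext w; simp; tauto
          · rw [hcj]; ext w; simp; tauto
          · rw [hcl]; ext w; simp; tauto
        refine ⟨hset ▸ hb, ?_⟩
        rw [← hset, quad_image_fst]
        exact quad_univ hik hij hil (Ne.symm hjk) hkl hjl
  rw [hfilter]
  rw [Finset.card_insert_of_notMem, Finset.card_singleton]
  intro hE
  rw [Finset.mem_singleton] at hE
  have : ((i, g) : EdgeIdx n 4) ∈ ({(i, b), (j, b), (k, d), (l, d)} : Finset (EdgeIdx n 4)) :=
    hE ▸ (by simp)
  simp only [Finset.mem_insert, Finset.mem_singleton, Prod.mk.injEq] at this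
  rcases this with ⟨_, h0⟩ | ⟨h0, _⟩ | ⟨h0, _⟩ | ⟨h0, _⟩
  · exact hbg h0.symm
  · exact hij h0
  · exact hik h0
  · exact hil h0

end counts
section classifymain
variable {n : ℕ}

set_option maxHeartbeats 1000000 in
lemma classify {c : Fin 4 → Clause n} {s : Finset (EdgeIdx n 4)} (hk : IsK22 c s) :
    (∃ a b d f g h : Lit n, [a, b, d, f, g, h].Pairwise (· ≠ ·) ∧
      ({(c 0).1, (c 1).1, (c 2).1, (c 3).1} : Multiset (Finset (Lit n)))
        = {{a, b, g}, {a, b, h}, {d, f, g}, {d, f, h}}) ∨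
    (∃ a b d g h : Lit n, [a, b, d, g, h].Pairwise (· ≠ ·) ∧
      ({(c 0).1, (c 1).1, (c 2).1, (c 3).1} : Multiset (Finset (Lit n)))
        = {{a, b, g}, {a, b, h}, {a, d, g}, {a, d, h}}) := by
  obtain ⟨p, p', q, q', i, j, k, l, hpp, hqq, hqp, hqp', hq'p, hq'p', hp2, hp'2,
    hij, hik, hil, hjk, hjl, hkl, hc1, hc2, hc3, hc4, _hseq⟩ := k22_spec hk
  have hms : ({(c 0).1, (c 1).1, (c 2).1, (c 3).1} : Multiset (Finset (Lit n)))
      = {insert q p, insert q' p, insert q p', insert q' p'} := by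
    rw [← hc1, ← hc2, ← hc3, ← hc4]
    exact (pos4 (x := fun t => (c t).1) hij hik hil hjk hjl hkl).symm
  obtain ⟨a, b, hab, rfl⟩ := Finset.card_eq_two.mp hp2
  obtain ⟨d, f, hdf, rfl⟩ := Finset.card_eq_two.mp hp'2
  simp only [Finset.mem_insert, Finset.mem_singleton, not_or] at hqp hqp' hq'p hq'p'
  obtain ⟨hqa, hqb⟩ := hqp
  obtain ⟨hqd, hqf⟩ := hqp'
  obtain ⟨hq'a, hq'b⟩ := hq'p
  obtain ⟨hq'd, hq'f⟩ := hq'p'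
  by_cases had : a = d
  · subst had
    have hbf : b ≠ f := by rintro rfl; exact hpp rfl
    right
    refine ⟨a, b, f, q, q', ?_, ?_⟩
    · simp [List.pairwise_cons, hab, hdf, Ne.symm hqa, Ne.symm hq'a, hbf, Ne.symm hqb,
        Ne.symm hq'b, Ne.symm hqf, Ne.symm hq'f, hqq]
    · rw [hms, tri_insert a b q, tri_insert a b q', tri_insert a f q, tri_insert a f q']
  by_cases haf : a = f
  · subst haf
    have hbd : b ≠ d := by rintro rfl; exact hpp (Finset.pair_comm a b)
    right
    refine ⟨a, b, d, q, q', ?_, ?_⟩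
    · simp [List.pairwise_cons, hab, Ne.symm hdf, Ne.symm hqa, Ne.symm hq'a, hbd,
        Ne.symm hqb, Ne.symm hq'b, Ne.symm hqd, Ne.symm hq'd, hqq]
    · rw [hms, tri_insert a b q, tri_insert a b q', tri2 a d q, tri2 a d q']
  by_cases hbd : b = d
  · subst hbd
    have haf' : a ≠ f := by rintro rfl; exact hpp (Finset.pair_comm a b)
    right
    refine ⟨b, a, f, q, q', ?_, ?_⟩
    · simp [List.pairwise_cons, Ne.symm hab, hdf, Ne.symm hqb, Ne.symm hq'b, haf',
        Ne.symm hqa, Ne.symm hq'a, Ne.symm hqf, Ne.symm hq'f, hqq]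
    · rw [hms, tri2 b a q, tri2 b a q', tri_insert b f q, tri_insert b f q']
  by_cases hbf : b = f
  · subst hbf
    right
    refine ⟨b, a, d, q, q', ?_, ?_⟩
    · simp [List.pairwise_cons, Ne.symm hab, Ne.symm hdf, Ne.symm hqb, Ne.symm hq'b, had,
        Ne.symm hqa, Ne.symm hq'a, Ne.symm hqd, Ne.symm hq'd, hqq]
    · rw [hms, tri2 b a q, tri2 b a q', tri2 b d q, tri2 b d q']
  · left
    refine ⟨a, b, d, f, q, q', ?_, ?_⟩
    · simp [List.pairwise_cons, hab, had, haf, hbd, hbf, hdf, Ne.symm hqa, Ne.symm hqb,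
        Ne.symm hqd, Ne.symm hqf, Ne.symm hq'a, Ne.symm hq'b, Ne.symm hq'd, Ne.symm hq'f, hqq]
    · rw [hms, tri_insert a b q, tri_insert a b q', tri_insert d f q, tri_insert d f q']

lemma part4 {m : ℕ} (C : SatInstance n m) (s : Finset (EdgeIdx n m)) (hk : IsK22 C s) :
    (s.image Prod.fst).card = 4 := by
  obtain ⟨p, p', q, q', i, j, k, l, hpp, hqq, hqp, hqp', hq'p, hq'p', hp2, hp'2,
    hij, hik, hil, hjk, hjl, hkl, hc1, hc2, hc3, hc4, hseq⟩ := k22_spec hk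
  subst hseq
  rw [quad_image_fst, Finset.card_insert_of_notMem (by simp [hij, hik, hil]),
    Finset.card_insert_of_notMem (by simp [hjk, hjl]),
    Finset.card_insert_of_notMem (by simp [hkl]), Finset.card_singleton]

end classifymain

set_option maxHeartbeats 1000000 in
/-- Structure of `K_{2,2}`-edge-sets formed by four clauses: letting `N` be the number of
`K_{2,2}`-edge-sets of `G((c₁,c₂,c₃,c₄))` using exactly one edge from each clause,
`N ∈ {0,1,2}`; `N = 1` iff the clauses are `{a,b,g},{a,b,h},{d,f,g},{d,f,h}` (as a
multiset) for six pairwise distinct literals, and `N = 2` iff they are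
`{a,b,g},{a,b,h},{a,d,g},{a,d,h}` for five pairwise distinct literals. Moreover, every
`K_{2,2}`-edge-set of `G(C)` of any instance uses one edge from each of four pairwise
distinct clause positions. -/
theorem stmt9 (n : ℕ) (hn : 3 ≤ n) (c : Fin 4 → Clause n) :
    let N := (Finset.univ.filter fun s : Finset (EdgeIdx n 4) =>
      IsK22 c s ∧ s.image Prod.fst = (Finset.univ : Finset (Fin 4))).card
    (N = 0 ∨ N = 1 ∨ N = 2) ∧
    (N = 1 ↔ ∃ a b d f g h : Lit n, [a, b, d, f, g, h].Pairwise (· ≠ ·) ∧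
      ({(c 0).1, (c 1).1, (c 2).1, (c 3).1} : Multiset (Finset (Lit n)))
        = {{a, b, g}, {a, b, h}, {d, f, g}, {d, f, h}}) ∧
    (N = 2 ↔ ∃ a b d g h : Lit n, [a, b, d, g, h].Pairwise (· ≠ ·) ∧
      ({(c 0).1, (c 1).1, (c 2).1, (c 3).1} : Multiset (Finset (Lit n)))
        = {{a, b, g}, {a, b, h}, {a, d, g}, {a, d, h}}) ∧
    (∀ (m : ℕ) (C : SatInstance n m) (s : Finset (EdgeIdx n m)),
      IsK22 C s → (s.image Prod.fst).card = 4) := by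
  intro N
  have hN : N = (Finset.univ.filter fun s : Finset (EdgeIdx n 4) =>
      IsK22 c s ∧ s.image Prod.fst = (Finset.univ : Finset (Fin 4))).card := rfl
  have hcount1 : (∃ a b d f g h : Lit n, [a, b, d, f, g, h].Pairwise (· ≠ ·) ∧
      ({(c 0).1, (c 1).1, (c 2).1, (c 3).1} : Multiset (Finset (Lit n)))
        = {{a, b, g}, {a, b, h}, {d, f, g}, {d, f, h}}) → N = 1 := by
    rintro ⟨a, b, d, f, g, h, hpw, hms⟩
    simp only [List.pairwise_cons, List.mem_cons, List.mem_singleton, List.not_mem_nil,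
      forall_eq_or_imp, forall_eq, false_implies, implies_true, and_true,
      List.Pairwise.nil] at hpw
    obtain ⟨⟨hab, had, haf, hag, hah⟩, ⟨hbd, hbf, hbg, hbh⟩, ⟨hdf, hdg, hdh⟩,
      ⟨hfg, hfh⟩, hgh⟩ := hpw
    obtain ⟨i, j, k, l, hij, hik, hil, hjk, hjl, hkl, hxi, hxj, hxk, hxl⟩ :=
      ms4 (x := fun t => (c t).1) hms
    rw [hN]
    exact count_shape1 hab had haf hag hah hbd hbf hbg hbh hdf hdg hdh hfg hfh hgh
      hij hik hil hjk hjl hkl hxi hxj hxk hxl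
  have hcount2 : (∃ a b d g h : Lit n, [a, b, d, g, h].Pairwise (· ≠ ·) ∧
      ({(c 0).1, (c 1).1, (c 2).1, (c 3).1} : Multiset (Finset (Lit n)))
        = {{a, b, g}, {a, b, h}, {a, d, g}, {a, d, h}}) → N = 2 := by
    rintro ⟨a, b, d, g, h, hpw, hms⟩
    simp only [List.pairwise_cons, List.mem_cons, List.mem_singleton, List.not_mem_nil,
      forall_eq_or_imp, forall_eq, false_implies, implies_true, and_true,
      List.Pairwise.nil] at hpw
    obtain ⟨⟨hab, had, hag, hah⟩, ⟨hbd, hbg, hbh⟩, ⟨hdg, hdh⟩, hgh⟩ := hpw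
    obtain ⟨i, j, k, l, hij, hik, hil, hjk, hjl, hkl, hxi, hxj, hxk, hxl⟩ :=
      ms4 (x := fun t => (c t).1) hms
    rw [hN]
    exact count_shape2 hab had hag hah hbd hbg hbh hdg hdh hgh
      hij hik hil hjk hjl hkl hxi hxj hxk hxl
  have hclassify : N ≠ 0 →
      (∃ a b d f g h : Lit n, [a, b, d, f, g, h].Pairwise (· ≠ ·) ∧
        ({(c 0).1, (c 1).1, (c 2).1, (c 3).1} : Multiset (Finset (Lit n)))
          = {{a, b, g}, {a, b, h}, {d, f, g}, {d, f, h}}) ∨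
      (∃ a b d g h : Lit n, [a, b, d, g, h].Pairwise (· ≠ ·) ∧
        ({(c 0).1, (c 1).1, (c 2).1, (c 3).1} : Multiset (Finset (Lit n)))
          = {{a, b, g}, {a, b, h}, {a, d, g}, {a, d, h}}) := by
    intro h0
    rw [hN] at h0
    obtain ⟨s, hs⟩ := Finset.card_pos.mp (Nat.pos_of_ne_zero h0)
    rw [Finset.mem_filter] at hs
    exact classify hs.2.1
  refine ⟨?_, ⟨?_, ?_⟩, ⟨?_, ?_⟩, fun m C s hk => part4 C s hk⟩
  · by_cases h0 : N = 0
    · exact Or.inl h0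
    · rcases hclassify h0 with hs | hs
      · exact Or.inr (Or.inl (hcount1 hs))
      · exact Or.inr (Or.inr (hcount2 hs))
  · intro h1
    rcases hclassify (by omega) with hs | hs
    · exact hs
    · exact absurd (hcount2 hs) (by omega)
  · exact hcount1
  · intro h2
    rcases hclassify (by omega) with hs | hs
    · exact absurd (hcount1 hs) (by omega)
    · exact hs
  · exact hcount2
end

section
/- For all integers n ≥ 10 and 1 ≤ m ≤ √10 · n^{5/2} and every probability distribution D in D_4(n,m), E_{C∼D}[κ(C)] ≤ 81·m⁴/(64·n⁶) + 729·m³/(32·n⁴). -/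
open scoped Classical

/-!
A copy of `K_{2,2}` in `G(C)` with left vertices `u, u'` and right vertices `v, v'` is carried by
four distinct clause positions holding the four distinct clauses `v ∪ u, v ∪ u', v' ∪ u, v' ∪ u'`.
Recording these positions together with `v, v', u, u'` labels each copy in exactly four ways (swap
`u, u'` and/or `v, v'`). By 4-wise independence a fixed labelling is realised with probability
`M⁻⁴`, and there are at most `m⁴ (2n)² (2(n-1)(n-2))²` labellings, so
`E κ ≤ 81 m⁴ / (64 n² (n-1)² (n-2)²)`. For `m ≤ √10 n^{5/2}` the excess of this bound over
`81 m⁴ / (64 n⁶)` is at most `729 m³ / (32 n⁴)`.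
-/

open Finset

def literalPairsAvoiding (n : ℕ) (x : Fin n) : Finset (Finset (Lit n)) :=
  {u | #u = 2 ∧ #(u.image Prod.fst) = 2 ∧ x ∉ u.image Prod.fst}

lemma mem_literalPairsAvoiding_iff {n : ℕ} {v : Lit n} {u : Finset (Lit n)} :
    u ∈ literalPairsAvoiding n v.1 ↔
      v ∉ u ∧ #(insert v u) = 3 ∧ #((insert v u).image Prod.fst) = 3 := by
  simp only [literalPairsAvoiding, mem_filter, mem_univ, true_and, image_insert]
  constructor
  · rintro ⟨hu, hfst, hv⟩
    have hvu : v ∉ u := fun h => hv (mem_image_of_mem _ h)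
    rw [card_insert_of_notMem hvu, card_insert_of_notMem hv, hu, hfst]
    exact ⟨hvu, rfl, rfl⟩
  · rintro ⟨hvu, hu, hfst⟩
    rw [card_insert_of_notMem hvu] at hu
    have hle : #(u.image Prod.fst) ≤ #u := card_image_le
    by_cases hv : v.1 ∈ u.image Prod.fst
    · rw [insert_eq_of_mem hv] at hfst
      omega
    · rw [card_insert_of_notMem hv] at hfst
      exact ⟨by omega, by omega, hv⟩

lemma card_literalPairsAvoiding_le (n : ℕ) (x : Fin n) :
    #(literalPairsAvoiding n x) ≤ 2 * ((n - 1) * (n - 2)) := by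
  set Q := ((univ : Finset (Fin n)).erase x).offDiag ×ˢ (univ : Finset (Bool × Bool))
  let pair : (Fin n × Fin n) × (Bool × Bool) → Finset (Lit n) :=
    fun q => {(q.1.1, q.2.1), (q.1.2, q.2.2)}
  have hsub : literalPairsAvoiding n x ⊆ Q.image pair := by
    intro u hu
    obtain ⟨hu, hfst, hx⟩ := (mem_filter.1 hu).2
    obtain ⟨a, b, -, rfl⟩ := card_eq_two.1 hu
    have hab : a.1 ≠ b.1 := fun h => by simp [h] at hfst
    have hxa : a.1 ≠ x := fun h => hx (h ▸ mem_image_of_mem _ (mem_insert_self a {b}))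
    have hxb : b.1 ≠ x := fun h =>
      hx (h ▸ mem_image_of_mem _ (mem_insert_of_mem (mem_singleton_self b)))
    refine mem_image.2 ⟨((a.1, b.1), (a.2, b.2)), ?_, rfl⟩
    simp [Q, hab, hxa, hxb]
  -- each pair `{ℓ, ℓ'}` arises from both orderings of `ℓ, ℓ'`
  have hfib : 2 * #(Q.image pair) ≤ #Q := by
    refine mul_card_image_le_card Q 2 fun b hb => ?_
    obtain ⟨q, hq, rfl⟩ := mem_image.1 hb
    have hne : q ≠ ((q.1.2, q.1.1), (q.2.2, q.2.1)) := by
      intro h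
      simp only [Q, mem_product, mem_offDiag] at hq
      exact hq.1.2.2 (congrArg (·.1.1) h)
    calc 2 = #{q, ((q.1.2, q.1.1), (q.2.2, q.2.1))} := (card_pair hne).symm
      _ ≤ _ := card_le_card fun r hr => by
        rw [mem_insert, mem_singleton] at hr
        rcases hr with rfl | rfl
        · exact mem_filter.2 ⟨hq, rfl⟩
        · refine mem_filter.2 ⟨?_, pair_comm _ _⟩
          simp only [Q, mem_product, mem_offDiag] at hq ⊢
          exact ⟨⟨hq.1.2.1, hq.1.1, Ne.symm hq.1.2.2⟩, mem_univ _⟩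
  have hQ : #Q = (n - 1) * (n - 2) * 4 := by
    simp only [Q, card_product, offDiag_card, card_erase_of_mem (mem_univ x), card_univ,
      Fintype.card_fin, Fintype.card_prod, Fintype.card_bool]
    rw [← Nat.mul_sub_one, Nat.sub_sub]
  have := card_le_card hsub
  omega

lemma sum_mul_card_filter_eq_sum_pr {α β : Type*} [Fintype α] (D : α → ℝ) (W : Finset β)
    (E : β → α → Prop) : ∑ a, D a * #{w ∈ W | E w a} = ∑ w ∈ W, pr D (E w) := by
  simp only [card_filter, Nat.cast_sum, Nat.cast_ite, Nat.cast_one, Nat.cast_zero, mul_sum,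
    mul_ite, mul_one, mul_zero, pr, sum_filter]
  exact sum_comm

lemma eq_and_eq_of_insert_eq_insert {α : Type*} [DecidableEq α] {x y : α} {a b : Finset α}
    (hxa : x ∉ a) (hxb : x ∉ b) (hya : y ∉ a) (h : insert x a = insert y b) :
    x = y ∧ a = b := by
  obtain rfl : x = y := by
    have hy : y ∈ insert x a := h ▸ mem_insert_self y b
    exact ((mem_insert.1 hy).resolve_right hya).symm
  exact ⟨rfl, by rw [← erase_insert hxa, h, erase_insert hxb]⟩

section Witness

variable {n m : ℕ}

lemma insert_leftV {C : SatInstance n m} {e : EdgeIdx n m} (he : isEdge C e) :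
    insert e.2 (leftV C e) = (C e.1).1 :=
  insert_erase he

lemma notMem_leftV (C : SatInstance n m) (e : EdgeIdx n m) : e.2 ∉ leftV C e :=
  notMem_erase _ _

/-- A labelled copy of `K_{2,2}` in `G(C)`: the edges `u–v, u'–v, u–v', u'–v'` come from the
clauses at positions `pos 0, pos 1, pos 2, pos 3`. -/
@[ext]
structure K22Witness (n m : ℕ) where
  pos : Fin 4 → Fin m
  v : Lit n
  v' : Lit n
  u : Finset (Lit n)
  u' : Finset (Lit n)

instance : Fintype (K22Witness n m) :=
  Fintype.ofEquiv ((Fin 4 → Fin m) × (Lit n × Lit n) × (Finset (Lit n) × Finset (Lit n)))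
    { toFun := fun w => ⟨w.1, w.2.1.1, w.2.1.2, w.2.2.1, w.2.2.2⟩
      invFun := fun w => (w.pos, (w.v, w.v'), (w.u, w.u'))
      left_inv := fun _ => rfl
      right_inv := fun _ => rfl }

namespace K22Witness

def vertices (w : K22Witness n m) : Fin 4 → Finset (Lit n) × Lit n :=
  ![(w.u, w.v), (w.u', w.v), (w.u, w.v'), (w.u', w.v')]

def edges (w : K22Witness n m) : Finset (EdgeIdx n m) :=
  univ.image fun j => (w.pos j, (w.vertices j).2)

def IsGood (w : K22Witness n m) : Prop :=
  Function.Injective w.pos ∧ Function.Injective w.vertices ∧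
    ∀ j, (w.vertices j).1 ∈ literalPairsAvoiding n (w.vertices j).2.1

def Matches (C : SatInstance n m) (w : K22Witness n m) : Prop :=
  ∀ j, (C (w.pos j)).1 = insert (w.vertices j).2 (w.vertices j).1

lemma vertices_injective_iff {w : K22Witness n m} :
    Function.Injective w.vertices ↔ w.v ≠ w.v' ∧ w.u ≠ w.u' := by
  constructor
  · intro h
    refine ⟨fun hv => ?_, fun hu => ?_⟩
    · exact absurd (h (a₁ := 0) (a₂ := 2) (by simp [vertices, hv])) (by decide)
    · exact absurd (h (a₁ := 0) (a₂ := 1) (by simp [vertices, hu])) (by decide)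
  · rintro ⟨hv, hu⟩ j k hjk
    fin_cases j <;> fin_cases k <;> simp_all [vertices, eq_comm]

lemma notMem_vertices_of_forall_notMem {w : K22Witness n m}
    (h : ∀ j, (w.vertices j).2 ∉ (w.vertices j).1) (j k : Fin 4) :
    (w.vertices k).2 ∉ (w.vertices j).1 := by
  have h0 := h 0; have h1 := h 1; have h2 := h 2; have h3 := h 3
  fin_cases j <;> fin_cases k <;> simp_all [vertices]

lemma exists_of_isK22 {C : SatInstance n m} {s : Finset (EdgeIdx n m)} (h : IsK22 C s) :
    ∃ w : K22Witness n m, w.IsGood ∧ w.Matches C ∧ w.edges = s := by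
  obtain ⟨hcard, hedge, u, u', v, v', hu, hv, himg⟩ := h
  have hhit : ∀ j : Fin 4,
      ∃ e ∈ s, (leftV C e, e.2) = ![(u, v), (u', v), (u, v'), (u', v')] j := by
    intro j
    refine mem_image.1 (himg ▸ ?_)
    fin_cases j <;> simp
  choose e hes he using hhit
  let w : K22Witness n m := ⟨fun j => (e j).1, v, v', u, u'⟩
  have hvert : ∀ j, w.vertices j = (leftV C (e j), (e j).2) := fun j => (he j).symm
  have hvert_inj : Function.Injective w.vertices := vertices_injective_iff.2 ⟨hv, hu⟩
  have hmatch : w.Matches C := fun j => by rw [hvert, insert_leftV (hedge _ (hes j))]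
  have hdiag : ∀ j, (w.vertices j).2 ∉ (w.vertices j).1 := fun j => by
    rw [hvert]
    exact notMem_leftV C (e j)
  have hcross := notMem_vertices_of_forall_notMem hdiag
  have he_eq : ∀ j, e j = (w.pos j, (w.vertices j).2) := fun j => by rw [hvert]
  have he_inj : Function.Injective e := fun j k hjk => hvert_inj (by rw [hvert, hvert, hjk])
  refine ⟨w, ⟨fun j k hjk => hvert_inj ?_, hvert_inj, fun j => ?_⟩, hmatch, ?_⟩
  -- each right vertex avoids each left vertex, so one clause carries at most one edge of the copy
  · have hclause : insert (w.vertices j).2 (w.vertices j).1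
        = insert (w.vertices k).2 (w.vertices k).1 := by rw [← hmatch j, ← hmatch k, hjk]
    obtain ⟨h2, h1⟩ := eq_and_eq_of_insert_eq_insert (hdiag j) (hcross k j) (hcross j k) hclause
    exact Prod.ext h1 h2
  · exact mem_literalPairsAvoiding_iff.2 ⟨hdiag j, hmatch j ▸ (C (w.pos j)).2⟩
  · have himage : w.edges = univ.image e :=
      congrArg (univ.image ·) (funext fun j => (he_eq j).symm)
    rw [himage]
    refine eq_of_subset_of_card_le (fun x hx => ?_) ?_
    · obtain ⟨j, -, rfl⟩ := mem_image.1 hx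
      exact hes j
    · rw [hcard, card_image_of_injective _ he_inj, card_univ, Fintype.card_fin]

section Reindex

variable {w w' : K22Witness n m} (σ : Equiv.Perm (Fin 4))

lemma IsGood.reindex (hpos : w'.pos = w.pos ∘ σ) (hvert : w'.vertices = w.vertices ∘ σ)
    (h : w.IsGood) : w'.IsGood := by
  rw [IsGood, hpos, hvert]
  exact ⟨h.1.comp σ.injective, h.2.1.comp σ.injective, fun j => h.2.2 (σ j)⟩

lemma Matches.reindex {C : SatInstance n m} (hpos : w'.pos = w.pos ∘ σ)
    (hvert : w'.vertices = w.vertices ∘ σ) (h : w.Matches C) : w'.Matches C := by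
  rw [Matches, hpos, hvert]
  exact fun j => h (σ j)

lemma edges_reindex (hpos : w'.pos = w.pos ∘ σ) (hvert : w'.vertices = w.vertices ∘ σ) :
    w'.edges = w.edges := by
  have h := congrArg (image fun j => (w.pos j, (w.vertices j).2)) (image_univ_equiv σ)
  rw [image_image] at h
  rw [edges, edges, hpos, hvert]
  exact h

end Reindex

def swapLeft (w : K22Witness n m) : K22Witness n m :=
  ⟨w.pos ∘ ⇑(Equiv.swap 0 1 * Equiv.swap 2 3 : Equiv.Perm (Fin 4)), w.v, w.v', w.u', w.u⟩

def swapRight (w : K22Witness n m) : K22Witness n m :=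
  ⟨w.pos ∘ ⇑(Equiv.swap 0 2 * Equiv.swap 1 3 : Equiv.Perm (Fin 4)), w.v', w.v, w.u, w.u'⟩

lemma vertices_swapLeft (w : K22Witness n m) :
    w.swapLeft.vertices =
      w.vertices ∘ ⇑(Equiv.swap 0 1 * Equiv.swap 2 3 : Equiv.Perm (Fin 4)) := by
  funext j
  fin_cases j <;> rfl

lemma vertices_swapRight (w : K22Witness n m) :
    w.swapRight.vertices =
      w.vertices ∘ ⇑(Equiv.swap 0 2 * Equiv.swap 1 3 : Equiv.Perm (Fin 4)) := by
  funext j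
  fin_cases j <;> rfl

lemma pr_matches {D : SatInstance n m → ℝ} (h4 : KWiseUniform n m 4 D) {w : K22Witness n m}
    (hw : w.IsGood) : pr D (Matches · w) = (1 / (8 * (n.choose 3 : ℝ))) ^ 4 := by
  have hclause j := (mem_literalPairsAvoiding_iff.1 (hw.2.2 j)).2
  rw [← h4 w.pos hw.1 fun j => ⟨_, hclause j⟩]
  simp only [Matches, Subtype.ext_iff]

lemma card_isGood_le :
    #{w : K22Witness n m | w.IsGood} ≤ m ^ 4 * (2 * n) ^ 2 * (2 * ((n - 1) * (n - 2))) ^ 2 := by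
  let fiber : (Fin 4 → Fin m) × Lit n × Lit n → Finset (K22Witness n m) := fun p =>
    (literalPairsAvoiding n p.2.1.1 ×ˢ literalPairsAvoiding n p.2.1.1).image
      fun q => ⟨p.1, p.2.1, p.2.2, q.1, q.2⟩
  have hsub : ({w | w.IsGood} : Finset (K22Witness n m)) ⊆ univ.biUnion fiber := by
    intro w hw
    have hgood : w.IsGood := (mem_filter.1 hw).2
    exact mem_biUnion.2 ⟨(w.pos, w.v, w.v'), mem_univ _,
      mem_image.2 ⟨(w.u, w.u'), mem_product.2 ⟨hgood.2.2 0, hgood.2.2 1⟩, rfl⟩⟩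
  have hfiber : ∀ p ∈ univ, #(fiber p) ≤ (2 * ((n - 1) * (n - 2))) ^ 2 := fun p _ =>
    card_image_le.trans <| by
      rw [card_product, sq]
      exact Nat.mul_le_mul (card_literalPairsAvoiding_le n _) (card_literalPairsAvoiding_le n _)
  calc _ ≤ _ := card_le_card hsub
    _ ≤ _ := card_biUnion_le_card_mul _ _ _ hfiber
    _ = _ := by
      simp only [card_univ, Fintype.card_prod, Fintype.card_pi, Fintype.card_fin, prod_const,
        Fintype.card_bool]
      ring

end K22Witness

end Witness

open K22Witness in
lemma four_mul_kappa_le {n m : ℕ} (C : SatInstance n m) :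
    4 * kappa C ≤ #{w : K22Witness n m | w.IsGood ∧ w.Matches C} := by
  set A : Finset (K22Witness n m) := {w | w.IsGood ∧ w.Matches C}
  have hmem : ∀ {w w' : K22Witness n m} (σ : Equiv.Perm (Fin 4)), w ∈ A →
      w'.pos = w.pos ∘ σ → w'.vertices = w.vertices ∘ σ → w' ∈ {x ∈ A | x.edges = w.edges} :=
    fun σ hw hpos hvert => mem_filter.2 ⟨mem_filter.2 ⟨mem_univ _,
      (mem_filter.1 hw).2.1.reindex σ hpos hvert, (mem_filter.1 hw).2.2.reindex σ hpos hvert⟩,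
      edges_reindex σ hpos hvert⟩
  -- the four labellings obtained by swapping `u, u'` and/or `v, v'`
  have hfiber : ∀ b ∈ A.image edges, 4 ≤ #{w ∈ A | w.edges = b} := by
    intro b hb
    obtain ⟨w, hw, rfl⟩ := mem_image.1 hb
    obtain ⟨hv, hu⟩ := vertices_injective_iff.1 (mem_filter.1 hw).2.1.2.1
    have hfour : #{w, w.swapLeft, w.swapRight, w.swapRight.swapLeft} = 4 := by
      refine card_eq_four.2 ⟨_, _, _, _, ?_, ?_, ?_, ?_, ?_, ?_, rfl⟩ <;>
        simp [swapLeft, swapRight, K22Witness.ext_iff, hu, hv, hu.symm, hv.symm]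
    rw [← hfour]
    refine card_le_card fun x hx => ?_
    simp only [mem_insert, mem_singleton] at hx
    rcases hx with rfl | rfl | rfl | rfl
    · exact mem_filter.2 ⟨hw, rfl⟩
    · exact hmem _ hw rfl (vertices_swapLeft w)
    · exact hmem _ hw rfl (vertices_swapRight w)
    · exact hmem (Equiv.swap 0 2 * Equiv.swap 1 3 * (Equiv.swap 0 1 * Equiv.swap 2 3)) hw rfl
        (by rw [vertices_swapLeft, vertices_swapRight]; rfl)
  have hkappa : kappa C ≤ #(A.image edges) := card_le_card fun s hs => by
    obtain ⟨w, hgood, hmatch, rfl⟩ := exists_of_isK22 (mem_filter.1 hs).2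
    exact mem_image_of_mem _ (mem_filter.2 ⟨mem_univ _, hgood, hmatch⟩)
  have := mul_card_image_le_card A 4 hfiber
  omega

lemma expected_kappa_le {n m : ℕ} {D : SatInstance n m → ℝ} (hD : ∀ C, 0 ≤ D C)
    (h4 : KWiseUniform n m 4 D) :
    ∑ C, D C * (kappa C : ℝ)
      ≤ #{w : K22Witness n m | w.IsGood} * (1 / (8 * (n.choose 3 : ℝ))) ^ 4 / 4 := by
  have hcount := sum_mul_card_filter_eq_sum_pr D {w : K22Witness n m | w.IsGood}
    fun w C => w.Matches C
  rw [sum_congr rfl fun w hw => K22Witness.pr_matches h4 (mem_filter.1 hw).2, sum_const,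
    nsmul_eq_mul] at hcount
  rw [← hcount, sum_div]
  refine sum_le_sum fun C _ => ?_
  rw [mul_div_assoc]
  refine mul_le_mul_of_nonneg_left ?_ (hD C)
  rw [le_div_iff₀ four_pos, filter_filter]
  exact_mod_cast (mul_comm _ _).trans_le (four_mul_kappa_le C)

lemma cast_choose_three (n : ℕ) : (n.choose 3 : ℝ) = n * (n - 1) * (n - 2) / 6 := by
  obtain _ | _ | _ | n := n
  · simp
  · simp [Nat.choose]
  · simp
  · have h : (((n + 3).descFactorial 3 : ℕ) : ℝ)
        = ((Nat.factorial 3 * (n + 3).choose 3 : ℕ) : ℝ) :=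
      congrArg _ (Nat.descFactorial_eq_factorial_mul_choose (n + 3) 3)
    simp only [Nat.descFactorial_succ, Nat.descFactorial_zero, Nat.factorial] at h
    rw [eq_div_iff (by norm_num)]
    push_cast at h ⊢
    linear_combination -h

lemma pow_four_div_sq_falling_le (x N : ℝ) (hN : 10 ≤ N) (hx0 : 0 ≤ x) (hx : x ^ 2 ≤ 10 * N ^ 5) :
    81 * x ^ 4 / (64 * (N ^ 2 * ((N - 1) * (N - 2)) ^ 2))
      ≤ 81 * x ^ 4 / (64 * N ^ 6) + 729 * x ^ 3 / (32 * N ^ 4) := by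
  set a := (N - 1) * (N - 2)
  have hN0 : 0 < N := by linarith
  have ha : 7 * N ^ 2 / 10 ≤ a := by nlinarith
  have ha0 : 0 < a := lt_of_lt_of_le (by positivity) ha
  have hxN : x * N ≤ 3 * a ^ 2 := by
    refine (pow_le_pow_iff_left₀ (by positivity) (by positivity) two_ne_zero).1 ?_
    have ha4 : (7 * N ^ 2 / 10) ^ 4 ≤ a ^ 4 := pow_le_pow_left₀ (by positivity) ha 4
    nlinarith [mul_le_mul_of_nonneg_right hx (sq_nonneg N), pow_pos hN0 7]
  -- `N ^ 4 - a ^ 2 = (3 N - 2) (N ^ 2 + a) ≤ 6 N ^ 3`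
  have hdiff : N ^ 4 - a ^ 2 ≤ 6 * N ^ 3 := by nlinarith
  have key : x * N ^ 4 ≤ x * a ^ 2 + 18 * N ^ 2 * a ^ 2 := by
    nlinarith [mul_le_mul_of_nonneg_left hdiff hx0,
      mul_le_mul_of_nonneg_left hxN (by positivity : (0 : ℝ) ≤ 6 * N ^ 2)]
  have hgap : 81 * x ^ 4 / (64 * N ^ 6) + 729 * x ^ 3 / (32 * N ^ 4)
      - 81 * x ^ 4 / (64 * (N ^ 2 * a ^ 2))
      = 81 * x ^ 3 / (64 * N ^ 6 * a ^ 2) * (x * a ^ 2 + 18 * N ^ 2 * a ^ 2 - x * N ^ 4) := by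
    field_simp
    ring
  nlinarith [mul_nonneg (by positivity : 0 ≤ 81 * x ^ 3 / (64 * N ^ 6 * a ^ 2))
    (sub_nonneg.2 key)]

theorem stmt10_general (n m : ℕ) (hn : 10 ≤ n)
    (hm : (m : ℝ) ≤ Real.sqrt 10 * (n : ℝ) ^ ((5 : ℝ) / 2))
    (D : SatInstance n m → ℝ) (hD : IsDistribution D) (h4 : KWiseUniform n m 4 D) :
    ∑ C : SatInstance n m, D C * (kappa C : ℝ)
      ≤ 81 * (m : ℝ) ^ 4 / (64 * (n : ℝ) ^ 6) + 729 * (m : ℝ) ^ 3 / (32 * (n : ℝ) ^ 4) := by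
  have hm2 : (m : ℝ) ^ 2 ≤ 10 * (n : ℝ) ^ 5 := by
    calc (m : ℝ) ^ 2 ≤ (Real.sqrt 10 * (n : ℝ) ^ ((5 : ℝ) / 2)) ^ 2 :=
          pow_le_pow_left₀ (Nat.cast_nonneg m) hm 2
      _ = 10 * (n : ℝ) ^ 5 := by
        rw [mul_pow, Real.sq_sqrt (by norm_num), ← Real.rpow_natCast _ 2,
          ← Real.rpow_mul (Nat.cast_nonneg n)]
        norm_num
  calc ∑ C, D C * (kappa C : ℝ)
      ≤ #{w : K22Witness n m | w.IsGood} * (1 / (8 * (n.choose 3 : ℝ))) ^ 4 / 4 :=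
        expected_kappa_le hD.1 h4
    _ ≤ ((m ^ 4 * (2 * n) ^ 2 * (2 * ((n - 1) * (n - 2))) ^ 2 : ℕ) : ℝ)
          * (1 / (8 * (n.choose 3 : ℝ))) ^ 4 / 4 := by
        gcongr
        exact K22Witness.card_isGood_le
    _ = 81 * (m : ℝ) ^ 4 / (64 * ((n : ℝ) ^ 2 * (((n : ℝ) - 1) * ((n : ℝ) - 2)) ^ 2)) := by
        push_cast [cast_choose_three, Nat.cast_sub (by omega : 1 ≤ n),
          Nat.cast_sub (by omega : 2 ≤ n)]
        field_simp
        ring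
    _ ≤ _ := pow_four_div_sq_falling_le _ _ (by exact_mod_cast hn) (Nat.cast_nonneg m) hm2

/-- For all `n ≥ 10`, `1 ≤ m ≤ √10·n^{5/2}` and every `D ∈ 𝔇₄(n,m)`,
`E_{C∼D}[κ(C)] ≤ 81·m⁴/(64·n⁶) + 729·m³/(32·n⁴)`. -/
theorem stmt10 (n m : ℕ) (hn : 10 ≤ n) (hm1 : 1 ≤ m)
    (hm : (m : ℝ) ≤ Real.sqrt 10 * (n : ℝ) ^ ((5 : ℝ) / 2))
    (D : SatInstance n m → ℝ) (hD : IsDistribution D) (h4 : KWiseUniform n m 4 D) :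
    ∑ C : SatInstance n m, D C * (kappa C : ℝ)
      ≤ 81 * (m : ℝ) ^ 4 / (64 * (n : ℝ) ^ 6) + 729 * (m : ℝ) ^ 3 / (32 * (n : ℝ) ^ 4) :=
  stmt10_general n m hn hm D hD h4
end

section
/- Let C̃ be a finite set of m̃ pairwise distinct clauses over n ≥ 3 variables. Then κ(C̃) ≥ 81·m̃⁴/(64·n⁶) − 27·m̃³/(8·n⁴). -/
open scoped Classical

section StmtElevenAux

open Finset

variable {n : ℕ}

lemma stmt11_deg_eq_zero (T : Finset (Clause n)) (u : Finset (Lit n)) (hu : u.card ≠ 2) :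
    (Finset.univ.filter fun v : Lit n => adjSet T u v).card = 0 := by
  rw [Finset.card_eq_zero, Finset.filter_eq_empty_iff]
  rintro v - ⟨hv, c, hc, hcu⟩
  apply hu
  have h3 := c.2.1
  rw [hcu, Finset.card_insert_of_notMem hv] at h3
  omega

lemma stmt11_pair_count (T : Finset (Clause n)) (u : Finset (Lit n)) :
    (((Finset.univ : Finset (Lit n)).powersetCard 2).filter fun p => ∀ v ∈ p, adjSet T u v).card
      = ((Finset.univ.filter fun v : Lit n => adjSet T u v).card).choose 2 := by
  rw [← Finset.card_powersetCard]
  congr 1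
  ext p
  simp only [Finset.mem_filter, Finset.mem_powersetCard, Finset.subset_iff, Finset.mem_univ,
    true_and]
  tauto

lemma stmt11_v_count (T : Finset (Clause n)) (v : Lit n) :
    (Finset.univ.filter fun u : Finset (Lit n) => adjSet T u v).card
      = (T.filter fun c => v ∈ c.1).card := by
  symm
  apply Finset.card_bij (fun c _ => c.1.erase v)
  · rintro c hc
    simp only [Finset.mem_filter] at hc
    simp only [Finset.mem_filter, Finset.mem_univ, true_and]
    exact ⟨Finset.notMem_erase _ _, c, hc.1, (Finset.insert_erase hc.2).symm⟩
  · intro c1 h1 c2 h2 h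
    simp only [Finset.mem_filter] at h1 h2
    apply Subtype.ext
    rw [← Finset.insert_erase h1.2, ← Finset.insert_erase h2.2, h]
  · intro u hu
    simp only [Finset.mem_filter, Finset.mem_univ, true_and] at hu
    obtain ⟨hv, c, hc, hcu⟩ := hu
    refine ⟨c, Finset.mem_filter.mpr ⟨hc, by rw [hcu]; exact Finset.mem_insert_self _ _⟩, ?_⟩
    rw [hcu, Finset.erase_insert hv]

lemma stmt11_sum_deg (T : Finset (Clause n)) :
    ∑ u ∈ (Finset.univ : Finset (Lit n)).powersetCard 2,
        (Finset.univ.filter fun v : Lit n => adjSet T u v).card = 3 * T.card := by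
  rw [Finset.sum_subset (Finset.subset_univ _) (fun u _ hu =>
    stmt11_deg_eq_zero T u (by simpa [Finset.mem_powersetCard] using hu))]
  calc ∑ u : Finset (Lit n), (Finset.univ.filter fun v : Lit n => adjSet T u v).card
      = ∑ u : Finset (Lit n), ∑ v : Lit n, if adjSet T u v then 1 else 0 :=
        Finset.sum_congr rfl fun u _ => Finset.card_filter _ _
    _ = ∑ v : Lit n, ∑ u : Finset (Lit n), if adjSet T u v then 1 else 0 := Finset.sum_comm
    _ = ∑ v : Lit n, (Finset.univ.filter fun u : Finset (Lit n) => adjSet T u v).card :=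
        Finset.sum_congr rfl fun v _ => (Finset.card_filter _ _).symm
    _ = ∑ v : Lit n, (T.filter fun c => v ∈ c.1).card := by
        simp only [stmt11_v_count]
    _ = ∑ v : Lit n, ∑ c ∈ T, if v ∈ c.1 then 1 else 0 :=
        Finset.sum_congr rfl fun v _ => Finset.card_filter _ _
    _ = ∑ c ∈ T, ∑ v : Lit n, if v ∈ c.1 then 1 else 0 := Finset.sum_comm
    _ = ∑ _c ∈ T, 3 := by
        refine Finset.sum_congr rfl fun c _ => ?_
        rw [Finset.sum_ite_mem, Finset.univ_inter, Finset.sum_const, c.2.1]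
        simp
    _ = 3 * T.card := by
        rw [Finset.sum_const, smul_eq_mul, mul_comm]

lemma stmt11_sum_B (T : Finset (Clause n)) :
    ∑ p ∈ (Finset.univ : Finset (Lit n)).powersetCard 2,
        (Finset.univ.filter fun u : Finset (Lit n) => ∀ v ∈ p, adjSet T u v).card
      = ∑ u ∈ (Finset.univ : Finset (Lit n)).powersetCard 2,
        ((Finset.univ.filter fun v : Lit n => adjSet T u v).card).choose 2 := by
  have hext : ∑ u ∈ (Finset.univ : Finset (Lit n)).powersetCard 2,
        ((Finset.univ.filter fun v : Lit n => adjSet T u v).card).choose 2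
      = ∑ u : Finset (Lit n),
        ((Finset.univ.filter fun v : Lit n => adjSet T u v).card).choose 2 :=
    Finset.sum_subset (Finset.subset_univ _) (fun u _ hu => by
      rw [stmt11_deg_eq_zero T u (by simpa [Finset.mem_powersetCard] using hu)]
      rfl)
  rw [hext]
  calc ∑ p ∈ (Finset.univ : Finset (Lit n)).powersetCard 2,
        (Finset.univ.filter fun u : Finset (Lit n) => ∀ v ∈ p, adjSet T u v).card
      = ∑ p ∈ (Finset.univ : Finset (Lit n)).powersetCard 2,
          ∑ u : Finset (Lit n), if (∀ v ∈ p, adjSet T u v) then 1 else 0 :=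
        Finset.sum_congr rfl fun p _ => Finset.card_filter _ _
    _ = ∑ u : Finset (Lit n), ∑ p ∈ (Finset.univ : Finset (Lit n)).powersetCard 2,
          if (∀ v ∈ p, adjSet T u v) then 1 else 0 := Finset.sum_comm
    _ = ∑ u : Finset (Lit n),
          (((Finset.univ : Finset (Lit n)).powersetCard 2).filter
            fun p => ∀ v ∈ p, adjSet T u v).card :=
        Finset.sum_congr rfl fun u _ => (Finset.card_filter _ _).symm
    _ = ∑ u : Finset (Lit n),
          ((Finset.univ.filter fun v : Lit n => adjSet T u v).card).choose 2 := by
        simp only [stmt11_pair_count]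

lemma stmt11_cs {α : Type*} (s : Finset α) (g : α → ℕ) :
    ((∑ a ∈ s, g a : ℕ) : ℝ) ^ 2
      ≤ (s.card : ℝ) * (2 * ((∑ a ∈ s, (g a).choose 2 : ℕ) : ℝ) + ((∑ a ∈ s, g a : ℕ) : ℝ)) := by
  have h := sq_sum_le_card_mul_sum_sq (s := s) (f := fun a => (g a : ℝ))
  have he : ∑ a ∈ s, ((g a : ℝ)) ^ 2
      = 2 * ∑ a ∈ s, ((g a).choose 2 : ℝ) + ∑ a ∈ s, (g a : ℝ) := by
    rw [Finset.mul_sum, ← Finset.sum_add_distrib]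
    refine Finset.sum_congr rfl fun a _ => ?_
    rw [Nat.cast_choose_two]
    ring
  rw [he] at h
  push_cast
  exact h

set_option maxHeartbeats 1000000 in
lemma stmt11_real_final (x s k nr N : ℝ) (hx : 0 ≤ x) (hs : 0 ≤ s) (hk : 0 ≤ k)
    (hn : 3 ≤ nr) (hN : 0 < N) (hN2 : N ≤ 2 * nr ^ 2)
    (h1 : (3 * x) ^ 2 ≤ N * (2 * s + 3 * x)) (h2 : s ^ 2 ≤ N * (2 * k + s)) :
    81 * x ^ 4 / (64 * nr ^ 6) - 27 * x ^ 3 / (8 * nr ^ 4) ≤ k := by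
  have hnr : 0 < nr := by linarith
  have hn2 : (0:ℝ) < nr ^ 2 := by positivity
  have ha : 9 * x ^ 2 ≤ 2 * nr ^ 2 * (2 * s + 3 * x) := by
    nlinarith [mul_le_mul_of_nonneg_right hN2 (by linarith : (0:ℝ) ≤ 2 * s + 3 * x)]
  have hb : s ^ 2 ≤ 2 * nr ^ 2 * (2 * k + s) := by
    nlinarith [mul_le_mul_of_nonneg_right hN2 (by linarith : (0:ℝ) ≤ 2 * k + s)]
  rcases le_or_gt (3 * x) (8 * nr ^ 2) with hc | hc
  · have h0 : 81 * x ^ 4 / (64 * nr ^ 6) ≤ 27 * x ^ 3 / (8 * nr ^ 4) := by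
      rw [div_le_div_iff₀ (by positivity) (by positivity)]
      nlinarith [pow_nonneg hx 3, pow_pos hnr 4, mul_nonneg (pow_nonneg hx 3) (pow_pos hnr 4).le]
    linarith
  · have ha' : 9 * x ^ 2 - 6 * nr ^ 2 * x ≤ 4 * nr ^ 2 * s := by nlinarith
    have hb' : s ^ 2 - 2 * nr ^ 2 * s ≤ 4 * nr ^ 2 * k := by nlinarith
    have hd : 12 * nr ^ 2 ≤ s := by
      nlinarith [sq_nonneg (3 * x - 8 * nr ^ 2), mul_pos hn2 hn2]
    have hDlb : 48 * nr ^ 4 ≤ 9 * x ^ 2 - 6 * nr ^ 2 * x := by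
      nlinarith [sq_nonneg (3 * x - 8 * nr ^ 2), mul_pos hn2 hn2]
    have he : 0 ≤ (4 * nr ^ 2 * s - (9 * x ^ 2 - 6 * nr ^ 2 * x)) *
        (4 * nr ^ 2 * s + (9 * x ^ 2 - 6 * nr ^ 2 * x) - 8 * nr ^ 4) := by
      apply mul_nonneg (by linarith)
      nlinarith [mul_le_mul_of_nonneg_left hd (by positivity : (0:ℝ) ≤ 4 * nr ^ 2)]
    have step2 : (9 * x ^ 2 - 6 * nr ^ 2 * x) ^ 2
        - 8 * nr ^ 4 * (9 * x ^ 2 - 6 * nr ^ 2 * x)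
        ≤ 16 * nr ^ 4 * (s ^ 2 - 2 * nr ^ 2 * s) := by nlinarith [he]
    have step3 : (9 * x ^ 2 - 6 * nr ^ 2 * x) ^ 2
        - 8 * nr ^ 4 * (9 * x ^ 2 - 6 * nr ^ 2 * x) ≤ 64 * nr ^ 6 * k := by
      nlinarith [mul_le_mul_of_nonneg_left hb' (by positivity : (0:ℝ) ≤ 16 * nr ^ 4)]
    have step3' : 8 * nr ^ 4 * ((9 * x ^ 2 - 6 * nr ^ 2 * x) ^ 2
        - 8 * nr ^ 4 * (9 * x ^ 2 - 6 * nr ^ 2 * x)) ≤ 8 * nr ^ 4 * (64 * nr ^ 6 * k) :=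
      mul_le_mul_of_nonneg_left step3 (by positivity)
    have h3x : 0 ≤ 3 * x - nr ^ 2 := by nlinarith
    have hpoly : 0 ≤ 864 * x ^ 3 * nr ^ 6 - 288 * x ^ 2 * nr ^ 8 + 384 * x * nr ^ 10 := by
      have t1 : 0 ≤ x ^ 2 * nr ^ 6 * (3 * x - nr ^ 2) := mul_nonneg (by positivity) h3x
      have t2 : 0 ≤ x * nr ^ 10 := mul_nonneg hx (by positivity)
      linarith [t1, t2]
    rw [div_sub_div _ _ (by positivity) (by positivity), div_le_iff₀ (by positivity)]
    linarith [step3', hpoly]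

end StmtElevenAux

/-- For a set `T` of `m̃` pairwise distinct clauses over `n ≥ 3` variables,
`κ(T) ≥ 81·m̃⁴/(64·n⁶) − 27·m̃³/(8·n⁴)`. -/
theorem stmt11 (n : ℕ) (hn : 3 ≤ n) (T : Finset (Clause n)) :
    81 * (T.card : ℝ) ^ 4 / (64 * (n : ℝ) ^ 6) - 27 * (T.card : ℝ) ^ 3 / (8 * (n : ℝ) ^ 4)
      ≤ (kappaSet T : ℝ) := by
  classical
  have hcard : ((Finset.univ : Finset (Lit n)).powersetCard 2).card = (n * 2).choose 2 := by
    rw [Finset.card_powersetCard, Finset.card_univ]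
    congr 1
    simp [Fintype.card_prod]
  have hNpos : 0 < ((Finset.univ : Finset (Lit n)).powersetCard 2).card := by
    rw [hcard]
    exact Nat.choose_pos (by omega)
  have hNle : (((Finset.univ : Finset (Lit n)).powersetCard 2).card : ℝ) ≤ 2 * (n : ℝ) ^ 2 := by
    rw [hcard, Nat.cast_choose_two]
    have hn3 : (3 : ℝ) ≤ (n : ℝ) := by exact_mod_cast hn
    push_cast
    nlinarith
  have hkap : (∑ p ∈ (Finset.univ : Finset (Lit n)).powersetCard 2,
      ((Finset.univ.filter fun u : Finset (Lit n) => ∀ v ∈ p, adjSet T u v).card).choose 2)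
      = kappaSet T := rfl
  have hc1 := stmt11_cs ((Finset.univ : Finset (Lit n)).powersetCard 2)
      (fun u => (Finset.univ.filter fun v : Lit n => adjSet T u v).card)
  have hc2 := stmt11_cs ((Finset.univ : Finset (Lit n)).powersetCard 2)
      (fun p => (Finset.univ.filter fun u : Finset (Lit n) => ∀ v ∈ p, adjSet T u v).card)
  simp only [stmt11_sum_deg T, ← stmt11_sum_B T] at hc1
  simp only [hkap] at hc2
  have h1 : (3 * (T.card : ℝ)) ^ 2
      ≤ (((Finset.univ : Finset (Lit n)).powersetCard 2).card : ℝ)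
        * (2 * ((∑ p ∈ (Finset.univ : Finset (Lit n)).powersetCard 2,
            (Finset.univ.filter fun u : Finset (Lit n) => ∀ v ∈ p, adjSet T u v).card : ℕ) : ℝ)
          + 3 * (T.card : ℝ)) := by
    push_cast at hc1 ⊢
    convert hc1 using 2
  exact stmt11_real_final (T.card : ℝ)
    ((∑ p ∈ (Finset.univ : Finset (Lit n)).powersetCard 2,
        (Finset.univ.filter fun u : Finset (Lit n) => ∀ v ∈ p, adjSet T u v).card : ℕ) : ℝ)
    (kappaSet T : ℝ) (n : ℝ) _
    (Nat.cast_nonneg _) (Nat.cast_nonneg _) (Nat.cast_nonneg _) (by exact_mod_cast hn)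
    (by exact_mod_cast hNpos) hNle h1 hc2
end
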